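/- arXiv:2305.01305 — 5 statements merged into one kernel-verified Lean document; each statement's English description precedes it below -/
import Mathlib

section
/- Let k ≥ 3, r ∈ ℕ, and 𝒫 ⊆ [r]^k. Suppose that for every n ∈ ℕ and every coloring ψ of the (k−1)-element subsets of [n] by colors in [r], the k-graph H on [n] whose edges are the k-sets e = {i_1 < i_2 < … < i_k} with (ψ(e∖{i_1}), ψ(e∖{i_2}), …, ψ(e∖{i_k})) ∈ 𝒫 is F-free. Then π_{k−2}(F) ≥ |𝒫|/r^k. -/
open scoped Classical BigOperators

noncomputable section

/-- A family of finsets is `k`-uniform: every member has `k` elements. -/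
def HGIsUniform (k : ℕ) {V : Type*} (G : Finset (Finset V)) : Prop :=
  ∀ e ∈ G, e.card = k

/-- `𝒦_k(G)`: the `k`-element subsets of `Fin n` all of whose `j`-element subsets are
edges of the `j`-graph `G`, i.e. the `k`-sets spanning a clique `K_k^{(j)}` in `G`. -/
def cliqueSet (k j n : ℕ) (G : Finset (Finset (Fin n))) : Finset (Finset (Fin n)) :=
  (Finset.powersetCard k (Finset.univ : Finset (Fin n))).filter
    (fun e => ∀ s ∈ Finset.powersetCard j e, s ∈ G)

/-- A `k`-graph with edge set `E` on `Fin n` is `(d, μ, j)`-dense: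
`|𝒦_k(G) ∩ E| ≥ d·|𝒦_k(G)| − μ·n^k` for every `j`-graph `G` on the vertex set. -/
def IsDense (k j n : ℕ) (d μ : ℝ) (E : Finset (Finset (Fin n))) : Prop :=
  ∀ G : Finset (Finset (Fin n)), HGIsUniform j G →
    d * ((cliqueSet k j n G).card : ℝ) - μ * (n : ℝ) ^ k
      ≤ (((cliqueSet k j n G) ∩ E).card : ℝ)

/-- `E` contains no copy of the `k`-graph `F`. -/
def HGFree {f n : ℕ} (F : Finset (Finset (Fin f))) (E : Finset (Finset (Fin n))) : Prop :=
  ¬ ∃ g : Fin f → Fin n, Function.Injective g ∧ ∀ e ∈ F, e.image g ∈ E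

/-- The uniform Turán density `π_j(F)` of a `k`-graph `F`: the supremum of `d ∈ [0,1]`
such that for every `μ > 0` and every `n₀` there is an `F`-free `(d,μ,j)`-dense
`k`-graph on at least `n₀` vertices. -/
def uniformTuranDensity (k j f : ℕ) (F : Finset (Finset (Fin f))) : ℝ :=
  sSup {d : ℝ | d ∈ Set.Icc (0 : ℝ) 1 ∧ ∀ μ : ℝ, 0 < μ → ∀ n₀ : ℕ, ∃ n : ℕ, n₀ ≤ n ∧
    ∃ E : Finset (Finset (Fin n)), HGIsUniform k E ∧ HGFree F E ∧ IsDense k j n d μ E}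


/-- The `k`-graph on `[n]` determined by a coloring `ψ` of the `(k−1)`-subsets by `[r]`
and a pattern set `Pat ⊆ [r]^k`: a `k`-set `e = {i₁ < ⋯ < i_k}` is an edge iff the tuple
`(ψ(e∖{i₁}), …, ψ(e∖{i_k}))` lies in `Pat`. -/
def colorGraph (k n r : ℕ) (Pat : Finset (Fin k → Fin r))
    (ψ : Finset (Fin n) → Fin r) : Finset (Finset (Fin n)) :=
  (Finset.powersetCard k (Finset.univ : Finset (Fin n))).filter
    (fun e => ∃ h : e.card = k,
      (fun ℓ : Fin k => ψ (e.erase (e.orderEmbOfFin h ℓ))) ∈ Pat)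

/-!
Color the `(k-1)`-subsets of `[n]` uniformly at random and sort the `k`-sets into `n` classes by
the sum of their vertices modulo `n`. A `(k-1)`-set together with the class of a `k`-set
containing it determines that `k`-set, so distinct `k`-sets of one class have disjoint shadows:
their edge events are independent, each of probability `|Pat|/r^k`, and a class has at most
`n^(k-1)` members. A Chernoff bound therefore makes the number of edges in a class of `𝒦_k(G)`
fall short of its mean by `μ n^(k-1)` with probability at most `exp(-μ² n^(k-1)/4)`, which beats a
union bound over the `2^(n^(k-2))` graphs `G` and the `n` classes. Summing over the classes, some
coloring gives an `F`-free `(|Pat|/r^k, μ, k-2)`-dense hypergraph, for `n` arbitrarily large.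
-/

open Finset FinsetFamily

-- `exp x ≥ 1 + x` and `(1 - x + x ^ 2) * (1 + x) = 1 + x ^ 3 ≥ 1`.
theorem Real.exp_neg_le_one_sub_add_sq {x : ℝ} (hx : 0 ≤ x) : Real.exp (-x) ≤ 1 - x + x ^ 2 := by
  have hprod : Real.exp (-x) * Real.exp x = 1 := by
    rw [← Real.exp_add, neg_add_cancel, Real.exp_zero]
  nlinarith [Real.add_one_le_exp x, Real.exp_pos (-x), pow_nonneg hx 3]

theorem expect_ite_exp_neg_le {α : Type*} [Fintype α] [Nonempty α] {A : α → Prop}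
    [DecidablePred A] {p t : ℝ} (hp0 : 0 ≤ p)
    (hp : p ≤ 𝔼 ω, if A ω then (1 : ℝ) else 0) (ht : 0 ≤ t) :
    𝔼 ω, (if A ω then Real.exp (-t) else 1) ≤ Real.exp (p * (t ^ 2 - t)) := by
  have hlin : ∀ ω, (if A ω then Real.exp (-t) else 1)
      = 1 - (1 - Real.exp (-t)) * (if A ω then (1 : ℝ) else 0) := fun ω => by
    split_ifs <;> ring
  have hgap : t - t ^ 2 ≤ 1 - Real.exp (-t) := by linarith [Real.exp_neg_le_one_sub_add_sq ht]
  have hexp_le_one : Real.exp (-t) ≤ 1 := Real.exp_le_one_iff.2 (neg_nonpos.2 ht)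
  calc 𝔼 ω, (if A ω then Real.exp (-t) else 1)
      = 1 - (1 - Real.exp (-t)) * 𝔼 ω, (if A ω then (1 : ℝ) else 0) := by
        simp only [hlin, expect_sub_distrib, Fintype.expect_const, ← mul_expect]
    _ ≤ 1 + p * (t ^ 2 - t) := by nlinarith
    _ ≤ Real.exp (p * (t ^ 2 - t)) := by linarith [Real.add_one_le_exp (p * (t ^ 2 - t))]

section RandomFunction

variable {ι κ β : Type*} [Fintype κ] [DecidableEq κ] [Fintype β] [Nonempty β]

-- Swapping the coordinates in `A` between two independent copies of `ψ` is a bijection.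
theorem expect_mul_of_dependsOn_compl {A : Set κ} {F G : (κ → β) → ℝ}
    (hF : DependsOn F A) (hG : DependsOn G Aᶜ) :
    𝔼 ψ, F ψ * G ψ = (𝔼 ψ, F ψ) * 𝔼 ψ, G ψ := by
  let swap : (κ → β) × (κ → β) → (κ → β) × (κ → β) :=
    fun q => (A.piecewise q.1 q.2, A.piecewise q.2 q.1)
  have hswap : Function.Involutive swap := by
    rintro ⟨a, b⟩
    ext i <;> by_cases hi : i ∈ A <;> simp [swap, hi]
  calc 𝔼 ψ, F ψ * G ψ = 𝔼 q : (κ → β) × (κ → β), F (swap q).1 * G (swap q).2 := by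
        rw [← Finset.univ_product_univ, expect_product]
        refine expect_congr rfl fun a _ => ?_
        rw [← Fintype.expect_const (ι := κ → β) (F a * G a)]
        refine expect_congr rfl fun b _ => ?_
        congr 1
        · exact hF fun i hi => by simp [swap, hi]
        · exact hG fun i hi => by simp [swap, Set.notMem_of_mem_compl hi]
    _ = 𝔼 q : (κ → β) × (κ → β), F q.1 * G q.2 :=
        Fintype.expect_bijective swap hswap.bijective _ (fun q => F q.1 * G q.2) fun _ => rfl
    _ = (𝔼 ψ, F ψ) * 𝔼 ψ, G ψ := by
        rw [Fintype.expect_mul_expect, ← Finset.univ_product_univ, expect_product]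

theorem expect_prod_of_pairwiseDisjoint (C : Finset ι) (S : ι → Set κ)
    (hS : (C : Set ι).PairwiseDisjoint S) (f : ι → (κ → β) → ℝ)
    (hf : ∀ i ∈ C, DependsOn (f i) (S i)) :
    𝔼 ψ, ∏ i ∈ C, f i ψ = ∏ i ∈ C, 𝔼 ψ, f i ψ := by
  induction C using Finset.cons_induction with
  | empty => simp
  | cons i C hi ih =>
    have hrest : DependsOn (fun ψ => ∏ j ∈ C, f j ψ) (S i)ᶜ := fun ψ ψ' h =>
      prod_congr rfl fun j hj => hf j (mem_cons_of_mem hj) fun a ha => h a <|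
        (hS (mem_cons_self i C) (mem_cons_of_mem hj) fun h => hi (h ▸ hj)).symm.subset_compl_right ha
    simp only [prod_cons]
    rw [expect_mul_of_dependsOn_compl (hf i (mem_cons_self i C)) hrest,
      ih (hS.subset (by simp)) fun j hj => hf j (mem_cons_of_mem hj)]

theorem expect_ite_apply_eq [DecidableEq β] (a : κ) (b : β) :
    𝔼 ψ : κ → β, (if ψ a = b then (1 : ℝ) else 0) = (Fintype.card β : ℝ)⁻¹ := by
  calc 𝔼 ψ : κ → β, (if ψ a = b then (1 : ℝ) else 0)
      = 𝔼 q : β × ({j // j ≠ a} → β), (if q.1 = b then (1 : ℝ) else 0) :=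
        Fintype.expect_equiv (Equiv.funSplitAt a β) _ _ fun _ => rfl
    _ = 𝔼 c : β, (if c = b then (1 : ℝ) else 0) := by
        rw [← univ_product_univ, expect_product]
        exact expect_congr rfl fun c _ => Fintype.expect_const (if c = b then (1 : ℝ) else 0)
    _ = (Fintype.card β : ℝ)⁻¹ := by
        simp [NNRat.smul_def]

theorem expect_ite_comp_mem [DecidableEq β] {k : ℕ} {m : Fin k → κ} (hm : Function.Injective m)
    (P : Finset (Fin k → β)) :
    𝔼 ψ : κ → β, (if ψ ∘ m ∈ P then (1 : ℝ) else 0) = #P / (Fintype.card β : ℝ) ^ k := by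
  have hsplit : ∀ ψ : κ → β, (if ψ ∘ m ∈ P then (1 : ℝ) else 0)
      = ∑ σ ∈ P, ∏ ℓ, (if ψ (m ℓ) = σ ℓ then (1 : ℝ) else 0) := by
    intro ψ
    have hprod : ∀ σ : Fin k → β, ∏ ℓ, (if ψ (m ℓ) = σ ℓ then (1 : ℝ) else 0)
        = if ψ ∘ m = σ then 1 else 0 := by
      intro σ
      simp [prod_boole, funext_iff]
    simp [hprod]
  have hcoord : ∀ σ : Fin k → β, 𝔼 ψ : κ → β, ∏ ℓ, (if ψ (m ℓ) = σ ℓ then (1 : ℝ) else 0)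
      = ((Fintype.card β : ℝ)⁻¹) ^ k := by
    intro σ
    rw [expect_prod_of_pairwiseDisjoint univ (fun ℓ => {m ℓ})
      (fun ℓ _ ℓ' _ h => Set.disjoint_singleton.2 (hm.ne h))
      _ fun ℓ _ ψ ψ' h => by rw [h (m ℓ) rfl]]
    simp [expect_ite_apply_eq]
  rw [expect_congr rfl fun ψ _ => hsplit ψ, expect_sum_comm, sum_congr rfl fun σ _ => hcoord σ,
    sum_const, nsmul_eq_mul, inv_pow, div_eq_mul_inv]

-- Lower-tail Chernoff bound: Markov's inequality applied to `exp (-t X)`.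
theorem card_filter_card_lt_le (C : Finset ι) (S : ι → Set κ)
    (hS : (C : Set ι).PairwiseDisjoint S) (A : ι → (κ → β) → Prop)
    [∀ i, DecidablePred (A i)] (hA : ∀ i ∈ C, DependsOn (A i) (S i)) {p t : ℝ} (hp0 : 0 ≤ p)
    (hp : ∀ i ∈ C, p ≤ 𝔼 ψ, if A i ψ then (1 : ℝ) else 0) (ht : 0 ≤ t) (s : ℝ) :
    (#{ψ | (#{i ∈ C | A i ψ} : ℝ) < p * #C - s} : ℝ)
      ≤ Fintype.card (κ → β) * Real.exp (p * t ^ 2 * #C - t * s) := by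
  set X : (κ → β) → ℝ := fun ψ => #{i ∈ C | A i ψ}
  have hX : ∀ ψ, Real.exp (-t * X ψ) = ∏ i ∈ C, (if A i ψ then Real.exp (-t) else 1) := by
    intro ψ
    rw [prod_ite, prod_const, prod_const_one, mul_one, ← Real.exp_nat_mul, mul_comm]
  have hmgf : 𝔼 ψ, Real.exp (-t * X ψ) ≤ Real.exp (p * (t ^ 2 - t) * #C) := by
    simp only [hX]
    rw [expect_prod_of_pairwiseDisjoint C S hS _ fun i hi ψ ψ' h => by
      simp only [hA i hi h]]
    calc ∏ i ∈ C, 𝔼 ψ, (if A i ψ then Real.exp (-t) else 1)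
        ≤ ∏ _i ∈ C, Real.exp (p * (t ^ 2 - t)) :=
          prod_le_prod (fun i _ => expect_nonneg fun ψ _ => by positivity)
            fun i hi => expect_ite_exp_neg_le hp0 (hp i hi) ht
      _ = Real.exp (p * (t ^ 2 - t) * #C) := by
          rw [prod_const, ← Real.exp_nat_mul]; ring_nf
  have hmarkov : (#{ψ | X ψ < p * #C - s} : ℝ) * Real.exp (-t * (p * #C - s))
      ≤ ∑ ψ, Real.exp (-t * X ψ) := by
    rw [← nsmul_eq_mul]
    refine (card_nsmul_le_sum _ _ _ fun ψ hψ => ?_).trans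
      (sum_le_sum_of_subset_of_nonneg (subset_univ _) fun ψ _ _ => (Real.exp_pos _).le)
    exact Real.exp_le_exp.2 (by nlinarith [(mem_filter.1 hψ).2])
  rw [← Fintype.card_mul_expect] at hmarkov
  have hΩ : (0 : ℝ) ≤ Fintype.card (κ → β) := Nat.cast_nonneg _
  calc (#{ψ | X ψ < p * #C - s} : ℝ)
      = (#{ψ | X ψ < p * #C - s} : ℝ) * Real.exp (-t * (p * #C - s))
          * Real.exp (t * (p * #C - s)) := by
        rw [mul_assoc, ← Real.exp_add]; ring_nf; simp
    _ ≤ Fintype.card (κ → β) * Real.exp (p * (t ^ 2 - t) * #C) * Real.exp (t * (p * #C - s)) :=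
        mul_le_mul_of_nonneg_right (hmarkov.trans (mul_le_mul_of_nonneg_left hmgf hΩ))
          (Real.exp_pos _).le
    _ = Fintype.card (κ → β) * Real.exp (p * t ^ 2 * #C - t * s) := by
        rw [mul_assoc, ← Real.exp_add]; ring_nf

end RandomFunction

theorem mem_shadow_singleton {α : Type*} [DecidableEq α] {e t : Finset α} :
    t ∈ ∂ {e} ↔ ∃ a ∈ e, e.erase a = t := by
  simp [mem_shadow_iff]

theorem card_le_card_shadow_of_pairwiseDisjoint {α : Type*} [DecidableEq α]
    {𝒜 : Finset (Finset α)} (h𝒜 : (𝒜 : Set (Finset α)).PairwiseDisjoint fun e => ∂ {e})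
    (hempty : ∅ ∉ 𝒜) : #𝒜 ≤ #(∂ 𝒜) := by
  have hunion : ∂ 𝒜 = 𝒜.biUnion fun e => ∂ {e} := by
    ext t
    simp [mem_shadow_iff]
  rw [hunion]
  refine card_le_card_biUnion h𝒜 fun e he => ?_
  obtain ⟨a, ha⟩ := nonempty_iff_ne_empty.2 (ne_of_mem_of_not_mem he hempty)
  exact ⟨_, erase_mem_shadow (mem_singleton_self e) ha⟩

section SumClass

variable {n : ℕ}

def sumClass (e : Finset (Fin n)) : ℕ := (∑ x ∈ e, (x : ℕ)) % n

-- A set `t ⊆ e` with `#(e \ t) = 1` and the sum class of `e` determine the missing vertex.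
theorem disjoint_shadow_of_sumClass_eq {e e' : Finset (Fin n)} (h : sumClass e = sumClass e')
    (hne : e ≠ e') : Disjoint (∂ {e}) (∂ {e'}) := by
  rw [disjoint_left]
  intro t ht ht'
  obtain ⟨a, ha, rfl⟩ := mem_shadow_singleton.1 ht
  obtain ⟨b, hb, hab⟩ := mem_shadow_singleton.1 ht'
  have hsum : ((∑ x ∈ e.erase a, (x : ℕ)) + a) % n = ((∑ x ∈ e.erase a, (x : ℕ)) + b) % n := by
    rw [sum_erase_add e _ ha, ← hab, sum_erase_add e' _ hb]
    exact h
  have hmod : (a : ℕ) % n = b % n := Nat.ModEq.add_left_cancel' _ hsum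
  have hab' : a = b := Fin.ext (by rwa [Nat.mod_eq_of_lt a.isLt, Nat.mod_eq_of_lt b.isLt] at hmod)
  subst hab'
  exact hne (by rw [← insert_erase ha, ← insert_erase hb, hab])

theorem card_le_pow_of_sumClass_eq {k c : ℕ} (hk : 1 ≤ k) {𝒜 : Finset (Finset (Fin n))}
    (h𝒜 : HGIsUniform k 𝒜) (hc : ∀ e ∈ 𝒜, sumClass e = c) : #𝒜 ≤ n ^ (k - 1) := by
  have hsized : (𝒜 : Set (Finset (Fin n))).Sized k := fun e he => h𝒜 e he
  calc #𝒜 ≤ #(∂ 𝒜) := card_le_card_shadow_of_pairwiseDisjoint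
          (fun e he e' he' hne =>
            disjoint_shadow_of_sumClass_eq ((hc e he).trans (hc e' he').symm) hne)
          fun h => by have := h𝒜 ∅ h; simp at this; omega
    _ ≤ n.choose (k - 1) := by simpa using hsized.shadow.card_le
    _ ≤ n ^ (k - 1) := Nat.choose_le_pow _ _

end SumClass

theorem card_div_pow_le_one {k r : ℕ} (Pat : Finset (Fin k → Fin r)) :
    (#Pat : ℝ) / (r : ℝ) ^ k ≤ 1 := by
  refine div_le_one_of_le₀ ?_ (by positivity)
  exact_mod_cast (card_le_univ Pat).trans_eq (by simp)

section ColorGraph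

variable {k n r : ℕ} {Pat : Finset (Fin k → Fin r)}

theorem mem_colorGraph_iff {ψ : Finset (Fin n) → Fin r} {e : Finset (Fin n)} (he : #e = k) :
    e ∈ colorGraph k n r Pat ψ ↔ (fun ℓ : Fin k => ψ (e.erase (e.orderEmbOfFin he ℓ))) ∈ Pat := by
  simp [colorGraph, he]

theorem hgIsUniform_colorGraph (ψ : Finset (Fin n) → Fin r) :
    HGIsUniform k (colorGraph k n r Pat ψ) :=
  fun _ he => mem_powersetCard_univ.1 (mem_filter.1 he).1

theorem dependsOn_mem_colorGraph (e : Finset (Fin n)) :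
    DependsOn (fun ψ : Finset (Fin n) → Fin r => e ∈ colorGraph k n r Pat ψ) (∂ {e} : Set _) := by
  intro ψ ψ' h
  by_cases he : #e = k
  · simp only [mem_colorGraph_iff he]
    congr! 2 with ℓ
    exact h _ (erase_mem_shadow (mem_singleton_self e) (e.orderEmbOfFin_mem he ℓ))
  · have hnot : ∀ ψ : Finset (Fin n) → Fin r, e ∉ colorGraph k n r Pat ψ :=
      fun ψ hψ => he (hgIsUniform_colorGraph ψ e hψ)
    simp [hnot]

theorem expect_ite_mem_colorGraph [NeZero r] {e : Finset (Fin n)} (he : #e = k) :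
    𝔼 ψ : Finset (Fin n) → Fin r, (if e ∈ colorGraph k n r Pat ψ then (1 : ℝ) else 0)
      = #Pat / (r : ℝ) ^ k := by
  have hinj : Function.Injective fun ℓ => e.erase (e.orderEmbOfFin he ℓ) := fun ℓ ℓ' h =>
    (e.orderEmbOfFin he).injective ((erase_inj e (e.orderEmbOfFin_mem he ℓ)).1 h)
  have hcomp := expect_ite_comp_mem (β := Fin r) hinj Pat
  rw [Fintype.card_fin] at hcomp
  refine (expect_congr rfl fun ψ _ => ?_).trans hcomp
  simp only [mem_colorGraph_iff he, Function.comp_def]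

theorem card_filter_card_inter_colorGraph_lt_le [NeZero r] (hk : 1 ≤ k) {c : ℕ}
    {𝒜 : Finset (Finset (Fin n))} (h𝒜 : HGIsUniform k 𝒜) (hc : ∀ e ∈ 𝒜, sumClass e = c)
    {μ : ℝ} (hμ : 0 ≤ μ) :
    (#{ψ : Finset (Fin n) → Fin r | (#(𝒜 ∩ colorGraph k n r Pat ψ) : ℝ)
        < #Pat / (r : ℝ) ^ k * #𝒜 - μ * (n : ℝ) ^ (k - 1)} : ℝ)
      ≤ Fintype.card (Finset (Fin n) → Fin r) * Real.exp (-(μ ^ 2 / 4) * (n : ℝ) ^ (k - 1)) := by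
  set p : ℝ := #Pat / (r : ℝ) ^ k
  have hchernoff := card_filter_card_lt_le 𝒜 (fun e => (∂ {e} : Set (Finset (Fin n))))
    (fun e he e' he' hne => disjoint_coe.2 <|
      disjoint_shadow_of_sumClass_eq ((hc e he).trans (hc e' he').symm) hne)
    (fun e ψ => e ∈ colorGraph k n r Pat ψ) (fun e _ => dependsOn_mem_colorGraph e)
    (by positivity) (fun e he => (expect_ite_mem_colorGraph (h𝒜 e he)).ge)
    (t := μ / 2) (by positivity) (μ * (n : ℝ) ^ (k - 1))
  simp only [filter_mem_eq_inter] at hchernoff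
  refine hchernoff.trans (mul_le_mul_of_nonneg_left (Real.exp_le_exp.2 ?_) (Nat.cast_nonneg _))
  have hcard : (#𝒜 : ℝ) ≤ (n : ℝ) ^ (k - 1) := by
    exact_mod_cast card_le_pow_of_sumClass_eq hk h𝒜 hc
  have hp𝒜 : p * #𝒜 ≤ (n : ℝ) ^ (k - 1) := by
    have hp0 : 0 ≤ p := by positivity
    nlinarith [card_div_pow_le_one Pat]
  nlinarith [mul_le_mul_of_nonneg_left hp𝒜 (sq_nonneg μ)]

end ColorGraph

theorem exists_forall_not_of_sum_card_lt {ι Ω : Type*} [Fintype Ω] (J : Finset ι)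
    (B : ι → Ω → Prop) [∀ j, DecidablePred (B j)] {b : ℝ}
    (hB : ∀ j ∈ J, (#{ω | B j ω} : ℝ) ≤ b) (hJ : #J * b < Fintype.card Ω) :
    ∃ ω, ∀ j ∈ J, ¬ B j ω := by
  by_contra! hall
  have hcover : (univ : Finset Ω) ⊆ J.biUnion fun j => {ω | B j ω} := fun ω _ => by
    obtain ⟨j, hj, hω⟩ := hall ω
    exact mem_biUnion.2 ⟨j, hj, mem_filter.2 ⟨mem_univ ω, hω⟩⟩
  have hcard : (Fintype.card Ω : ℝ) ≤ #J * b := calc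
    (Fintype.card Ω : ℝ) ≤ ∑ j ∈ J, (#{ω | B j ω} : ℝ) := by
      exact_mod_cast (card_le_card hcover).trans card_biUnion_le
    _ ≤ ∑ _j ∈ J, b := sum_le_sum hB
    _ = #J * b := by rw [sum_const, nsmul_eq_mul]
  linarith

theorem eventually_two_pow_mul_mul_exp_lt_one {j : ℕ} (hj : 1 ≤ j) {c : ℝ} (hc : 0 < c) :
    ∀ᶠ n : ℕ in Filter.atTop,
      (2 : ℝ) ^ (n ^ j) * n * Real.exp (-c * (n : ℝ) ^ (j + 1)) < 1 := by
  refine Filter.eventually_atTop.2 ⟨⌈3 / c⌉₊ + 1, fun n hn => ?_⟩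
  have hn1 : (1 : ℝ) ≤ n := by exact_mod_cast (Nat.le_add_left 1 _).trans hn
  have hcn : 3 ≤ c * n := by
    have : 3 / c ≤ n := (Nat.le_ceil _).trans (by exact_mod_cast (Nat.le_succ _).trans hn)
    rwa [div_le_iff₀ hc, mul_comm] at this
  have hpow : (n : ℝ) ≤ (n : ℝ) ^ j := le_self_pow₀ hn1 (by omega)
  have htwo : (2 : ℝ) ^ (n ^ j) ≤ Real.exp ((n : ℝ) ^ j) := by
    calc (2 : ℝ) ^ (n ^ j) ≤ Real.exp 1 ^ (n ^ j) :=
          pow_le_pow_left₀ (by norm_num) (by linarith [Real.add_one_le_exp 1]) _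
      _ = Real.exp ((n : ℝ) ^ j) := by rw [← Real.exp_nat_mul, mul_one]; push_cast; rfl
  have hlin : (n : ℝ) ≤ Real.exp ((n : ℝ) ^ j) := by
    linarith [Real.add_one_le_exp (n : ℝ), Real.exp_le_exp.2 hpow]
  calc (2 : ℝ) ^ (n ^ j) * n * Real.exp (-c * (n : ℝ) ^ (j + 1))
      ≤ Real.exp ((n : ℝ) ^ j) * Real.exp ((n : ℝ) ^ j) * Real.exp (-c * (n : ℝ) ^ (j + 1)) := by
        gcongr
    _ = Real.exp ((n : ℝ) ^ j * (2 - c * n)) := by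
        rw [← Real.exp_add, ← Real.exp_add, pow_succ]; ring_nf
    _ < 1 := Real.exp_lt_one_iff.2 (mul_neg_of_pos_of_neg (by positivity) (by linarith))

theorem sub_le_card_inter_of_forall_fiber {α : Type*} [DecidableEq α] (K E : Finset α)
    (f : α → ℕ) {n : ℕ} (hf : ∀ a ∈ K, f a < n) {p t : ℝ}
    (h : ∀ c < n, p * #{a ∈ K | f a = c} - t ≤ #({a ∈ K | f a = c} ∩ E)) :
    p * #K - n * t ≤ #(K ∩ E) := by
  have hK : (#K : ℝ) = ∑ c ∈ range n, (#{a ∈ K | f a = c} : ℝ) := by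
    exact_mod_cast card_eq_sum_card_fiberwise fun a ha => mem_range.2 (hf a ha)
  have hKE : (#(K ∩ E) : ℝ) = ∑ c ∈ range n, (#({a ∈ K | f a = c} ∩ E) : ℝ) := by
    simp_rw [filter_inter]
    exact_mod_cast card_eq_sum_card_fiberwise fun a ha =>
      mem_range.2 (hf a (mem_inter.1 ha).1)
  calc p * #K - n * t = ∑ c ∈ range n, (p * #{a ∈ K | f a = c} - t) := by
        rw [hK, mul_sum, sum_sub_distrib, sum_const, card_range, nsmul_eq_mul]
    _ ≤ #(K ∩ E) := hKE ▸ sum_le_sum fun c hc => h c (mem_range.1 hc)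

theorem exists_coloring_forall_sumClass {k j n r : ℕ} (hk : 1 ≤ k) [NeZero r]
    (Pat : Finset (Fin k → Fin r)) {μ : ℝ} (hμ : 0 ≤ μ)
    (hn : (2 : ℝ) ^ (n ^ j) * n * Real.exp (-(μ ^ 2 / 4) * (n : ℝ) ^ (k - 1)) < 1) :
    ∃ ψ : Finset (Fin n) → Fin r, ∀ G, HGIsUniform j G → ∀ c < n,
      #Pat / (r : ℝ) ^ k * #{e ∈ cliqueSet k j n G | sumClass e = c} - μ * (n : ℝ) ^ (k - 1)
        ≤ #({e ∈ cliqueSet k j n G | sumClass e = c} ∩ colorGraph k n r Pat ψ) := by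
  set J := (powersetCard j (univ : Finset (Fin n))).powerset ×ˢ range n
  set K : Finset (Finset (Fin n)) × ℕ → Finset (Finset (Fin n)) :=
    fun Gc => {e ∈ cliqueSet k j n Gc.1 | sumClass e = Gc.2}
  have hJ : (#J : ℝ) ≤ (2 : ℝ) ^ (n ^ j) * n := by
    rw [card_product, card_powerset, card_powersetCard, card_univ, Fintype.card_fin, card_range]
    push_cast
    gcongr
    · norm_num
    · exact Nat.choose_le_pow _ _
  have hΩ : (0 : ℝ) < Fintype.card (Finset (Fin n) → Fin r) := by exact_mod_cast Fintype.card_pos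
  obtain ⟨ψ, hψ⟩ := exists_forall_not_of_sum_card_lt J
    (fun Gc ψ => (#(K Gc ∩ colorGraph k n r Pat ψ) : ℝ)
      < #Pat / (r : ℝ) ^ k * #(K Gc) - μ * (n : ℝ) ^ (k - 1))
    (fun Gc _ => card_filter_card_inter_colorGraph_lt_le hk
      (fun e he => mem_powersetCard_univ.1 (mem_filter.1 (mem_filter.1 he).1).1)
      (fun e he => (mem_filter.1 he).2) hμ) <| by
      rw [← mul_assoc, mul_comm _ (Fintype.card (Finset (Fin n) → Fin r) : ℝ), mul_assoc]
      exact mul_lt_of_lt_one_right hΩ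
        ((mul_le_mul_of_nonneg_right hJ (Real.exp_pos _).le).trans_lt hn)
  refine ⟨ψ, fun G hG c hc => not_lt.1 (hψ (G, c) (mem_product.2 ⟨?_, mem_range.2 hc⟩))⟩
  exact mem_powerset.2 fun e he => mem_powersetCard_univ.2 (hG e he)

theorem stmt3_general (k r f : ℕ) (hk : 3 ≤ k) (hr : 0 < r)
    (F : Finset (Finset (Fin f)))
    (Pat : Finset (Fin k → Fin r))
    (hfree : ∀ (n : ℕ) (ψ : Finset (Fin n) → Fin r), HGFree F (colorGraph k n r Pat ψ)) :
    (Pat.card : ℝ) / (r : ℝ) ^ k ≤ uniformTuranDensity k (k - 2) f F := by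
  have : NeZero r := ⟨hr.ne'⟩
  refine le_csSup ⟨1, fun d hd => hd.1.2⟩
    ⟨⟨by positivity, card_div_pow_le_one Pat⟩, fun μ hμ n₀ => ?_⟩
  obtain ⟨n, hn, hn₀⟩ := ((eventually_two_pow_mul_mul_exp_lt_one (by omega : 1 ≤ k - 2)
    (by positivity : 0 < μ ^ 2 / 4)).and (Filter.eventually_ge_atTop (max n₀ 1))).exists
  rw [show k - 2 + 1 = k - 1 by omega] at hn
  obtain ⟨ψ, hψ⟩ := exists_coloring_forall_sumClass (by omega) Pat hμ.le hn
  refine ⟨n, le_of_max_le_left hn₀, colorGraph k n r Pat ψ, hgIsUniform_colorGraph ψ, hfree n ψ,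
    fun G hG => ?_⟩
  have hsum := sub_le_card_inter_of_forall_fiber _ (colorGraph k n r Pat ψ) sumClass
    (fun e _ => Nat.mod_lt _ (le_of_max_le_right hn₀)) (hψ G hG)
  rwa [← mul_assoc, mul_comm (n : ℝ), mul_assoc, ← pow_succ', show k - 1 + 1 = k by omega] at hsum

/-- Theorem 1.7. Let `k ≥ 3`, `r ∈ ℕ` and `Pat ⊆ [r]^k`.  If for every
`n` and every coloring `ψ` of the `(k−1)`-subsets of `[n]` by `[r]` the `k`-graph
`colorGraph k n r Pat ψ` is `F`-free, then `π_{k−2}(F) ≥ |Pat| / r^k`. -/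
theorem stmt3 (k r f : ℕ) (hk : 3 ≤ k) (hr : 0 < r)
    (F : Finset (Finset (Fin f))) (hF : HGIsUniform k F)
    (Pat : Finset (Fin k → Fin r))
    (hfree : ∀ (n : ℕ) (ψ : Finset (Fin n) → Fin r), HGFree F (colorGraph k n r Pat ψ)) :
    (Pat.card : ℝ) / (r : ℝ) ^ k ≤ uniformTuranDensity k (k - 2) f F :=
  stmt3_general k r f hk hr F Pat hfree

end
end

section
/- For k ≥ 3, a k-uniform hypergraph F has a vanishing ordering of its vertices if and only if there exists a k-edge-colored simple (k−1)-uniform directed hypergraph D on V(F) (with colors in ℤ_k) such that each k-edge of F corresponds to a directed tight (k−1)-uniform cycle of length k whose k directed edges are colored 0, 1, …, k−1 in cyclic order, and there exist two consecutive colors β, β+1 ∈ ℤ_k such that the transitive digraph T(D_{β,β+1}) of the sub-digraph D_{β,β+1} consisting of directed edges colored β or β+1 contains no directed cycles. -/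
open scoped Classical BigOperators

noncomputable section

/-- The rank (number of elements of `e` smaller under `ord`) of `x` in the finset `e`. -/
def rankIn {V : Type*} [DecidableEq V] (ord : V → ℕ) (e : Finset V) (x : V) : ℕ :=
  (e.filter (fun y => ord y < ord x)).card

/-- `F` is vanishing w.r.t. the vertex ordering induced by `ord`: the shadow `∂F` can be
partitioned into `k` classes `𝒞_1, …, 𝒞_k` (encoded by `C : Finset V → ℕ` with values
`< k`, class `ℓ` corresponding to value `ℓ − 1`) such that for every edge `e` and every
`x ∈ e`, the `(k−1)`-set `e ∖ {x}` lies in the class indexed by the rank of `x` in `e`. -/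
def IsVanishing {V : Type*} [DecidableEq V] (k : ℕ) (F : Finset (Finset V))
    (ord : V → ℕ) : Prop :=
  ∃ C : Finset V → ℕ, (∀ S, C S < k) ∧ ∀ e ∈ F, ∀ x ∈ e, C (e.erase x) = rankIn ord e x

/-- `F` has a vanishing ordering of its vertex set. -/
def HasVanishingOrdering {V : Type*} [DecidableEq V] (k : ℕ)
    (F : Finset (Finset V)) : Prop :=
  ∃ ord : V → ℕ, Function.Injective ord ∧ IsVanishing k F ord

/-- Arc relation of the transitive digraph `T(D_{β,β+1})` of the sub-digraph of the
colored `(k−1)`-uniform directed hypergraph `D` consisting of directed edges colored `β`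
or `β+1`: there is an arc `x → y` whenever some directed edge colored `β` or `β+1` has
`x` at an earlier position than `y`. -/
def TArc {V : Type*} (k : ℕ) (D : (Fin (k - 1) → V) → Option (ZMod k)) (β : ZMod k)
    (x y : V) : Prop :=
  ∃ t : Fin (k - 1) → V, (D t = some β ∨ D t = some (β + 1)) ∧
    ∃ a b : Fin (k - 1), a < b ∧ t a = x ∧ t b = y

/-!
Forward direction: list every edge `e` in increasing `ord`-order as `w : ℤ_k → e`, and let the
directed edges be the windows `(w c, …, w (c + k - 2))` of these cyclic lists, colored `c`. The
vertex missing from such a window is `w (c - 1)`, whose rank is `c - 1`, so the color is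
`C(window) + 1` for the vanishing partition `C`; hence the coloring only depends on the underlying
`(k-1)`-set, which also makes `D` simple. Windows colored `0` or `1` are increasing in `ord`, so
`T(D_{0,1})` is acyclic.

Backward direction: take an injective `ord` extending the acyclic `T(D_{β,β+1})`. Along each
cycle `w`, the arcs of the windows colored `β` and `β + 1` make `ord` increase along
`w β, w (β + 1), …, w (β + k - 1)`: the window colored `β` gives the first step and the window
colored `β + 1` all later ones. So `w i` has rank `i - β` in its edge, and
coloring the set `e ∖ {w i}`, which is the window colored `i + 1`, by `i - β` is a vanishing
partition; it is well defined because `D` is simple.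
-/

open Finset Function Relation

section RankIn

variable {V : Type*} [DecidableEq V] {ord : V → ℕ} {e : Finset V} {x y : V}

theorem rankIn_lt_card (hx : x ∈ e) : rankIn ord e x < #e :=
  card_lt_card (filter_ssubset.2 ⟨x, hx, lt_irrefl _⟩)

theorem rankIn_lt_rankIn_iff (hx : x ∈ e) :
    rankIn ord e x < rankIn ord e y ↔ ord x < ord y := by
  refine ⟨fun h => not_le.1 fun hyx => h.not_ge ?_, fun h => ?_⟩
  · exact card_le_card (monotone_filter_right _ fun z _ hz => hz.trans_le hyx)
  · refine card_lt_card ⟨monotone_filter_right _ fun z _ hz => hz.trans h, fun hsub => ?_⟩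
    exact lt_irrefl _ (mem_filter.1 (hsub (mem_filter.2 ⟨hx, h⟩))).2

theorem rankIn_injOn (hord : Injective ord) : Set.InjOn (rankIn ord e) e := by
  intro x hx y hy h
  rcases lt_trichotomy (ord x) (ord y) with hlt | heq | hgt
  · exact absurd h ((rankIn_lt_rankIn_iff hx).2 hlt).ne
  · exact hord heq
  · exact absurd h ((rankIn_lt_rankIn_iff hy).2 hgt).ne'

theorem exists_rankIn (hord : Injective ord) {m : ℕ} (hm : m < #e) :
    ∃ x ∈ e, rankIn ord e x = m := by
  have himage : e.image (rankIn ord e) = range #e :=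
    eq_of_subset_of_card_le (image_subset_iff.2 fun x hx => mem_range.2 (rankIn_lt_card hx))
      (by rw [card_range, card_image_of_injOn (rankIn_injOn hord)])
  exact mem_image.1 (himage ▸ mem_range.2 hm)

theorem rankIn_image {ι : Type*} {s : Finset ι} {u : ι → V} (hu : Set.InjOn u s) (a : ι) :
    rankIn ord (s.image u) (u a) = #{b ∈ s | ord (u b) < ord (u a)} := by
  rw [rankIn, filter_image, card_image_of_injOn (hu.mono (filter_subset _ _))]

theorem rankIn_image_range {u : ℕ → V} {n m : ℕ} (hu : StrictMonoOn (ord ∘ u) (Set.Iio n))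
    (hm : m < n) : rankIn ord ((range n).image u) (u m) = m := by
  have hinj : Set.InjOn u (range n) := fun a ha b hb h =>
    hu.injOn (by simpa using ha) (by simpa using hb) (congrArg ord h)
  rw [rankIn_image hinj]
  refine (congrArg card ?_).trans (card_range m)
  ext b
  simp only [mem_filter, mem_range]
  constructor
  · exact fun ⟨hb, h⟩ => (hu.lt_iff_lt hb hm).1 h
  · exact fun hb => ⟨hb.trans hm, (hu.lt_iff_lt (hb.trans hm) hm).2 hb⟩

theorem eq_of_image_univ_eq_of_lt_iff {ι : Type*} [Fintype ι] {t t' : ι → V}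
    (hord : Injective ord) (ht : Injective t) (ht' : Injective t')
    (himage : univ.image t = univ.image t')
    (hlt : ∀ a b, ord (t a) < ord (t b) ↔ ord (t' a) < ord (t' b)) : t = t' := by
  funext a
  have hrank : rankIn ord (univ.image t) (t a) = rankIn ord (univ.image t) (t' a) := by
    rw [rankIn_image ht.injOn, himage, rankIn_image ht'.injOn]
    simp only [hlt]
  exact rankIn_injOn hord (mem_image_of_mem t (mem_univ a))
    (himage ▸ mem_image_of_mem t' (mem_univ a)) hrank

end RankIn

theorem exists_injective_nat_of_acyclic {V : Type*} [Finite V] (r : V → V → Prop)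
    (hr : ∀ x, ¬ TransGen r x x) :
    ∃ ord : V → ℕ, Injective ord ∧ ∀ x y, r x y → ord x < ord y := by
  let _ : PartialOrder V :=
    { le := ReflTransGen r
      le_refl := fun _ => .refl
      le_trans := fun _ _ _ => ReflTransGen.trans
      le_antisymm := fun x y hxy hyx => by
        rcases reflTransGen_iff_eq_or_transGen.1 hxy with h | h
        · exact h.symm
        rcases reflTransGen_iff_eq_or_transGen.1 hyx with h' | h'
        · exact h'
        exact (hr x (h.trans h')).elim }
  have : Finite (LinearExtension V) := ‹Finite V›
  obtain ⟨φ⟩ := nonempty_orderEmbedding_of_finite_infinite (LinearExtension V) ℕ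
  have hext : StrictMono (toLinearExtension : V →o LinearExtension V) :=
    toLinearExtension.monotone.strictMono_of_injective fun _ _ h => h
  refine ⟨fun x => φ (toLinearExtension x), φ.injective.comp fun _ _ h => h, fun x y hxy => ?_⟩
  refine φ.strictMono (hext (lt_of_le_of_ne (ReflTransGen.single hxy) ?_))
  rintro rfl
  exact hr x (TransGen.single hxy)

theorem not_transGen_self_of_lt {V : Type*} {r : V → V → Prop} (ord : V → ℕ)
    (h : ∀ x y, r x y → ord x < ord y) (x : V) : ¬ TransGen r x x := fun hx =>
  lt_irrefl _ (transGen_eq_self (r := ((· < ·) : ℕ → ℕ → Prop)) ▸ hx.lift ord h)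

theorem exists_color_of_simple {ι V α : Type*} [Fintype ι] [DecidableEq V] [Nonempty α]
    (D : (ι → V) → Option α)
    (hsimp : ∀ t t', D t ≠ none → D t' ≠ none → Set.range t = Set.range t' → t = t') :
    ∃ col : Finset V → α, ∀ t c, D t = some c → col (univ.image t) = c := by
  let img : {t : ι → V // D t ≠ none} → Finset V := fun t => univ.image t.1
  have himg : Injective img := fun t t' h =>
    Subtype.ext (hsimp t t' t.2 t'.2 (by simpa [img] using congrArg ((↑) : Finset V → Set V) h))
  let a := Classical.arbitrary α
  refine ⟨extend img (fun t => (D t.1).getD a) fun _ => a, fun t c htc => ?_⟩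
  simpa [htc] using himg.extend_apply (fun t => (D t.1).getD a) (fun _ => a) ⟨t, by simp [htc]⟩

section TightCycle

variable {k : ℕ} {V : Type*}

def tightCycleEdge (w : ZMod k → V) (i : ZMod k) : Fin (k - 1) → V :=
  fun j => w (i + ((j : ℕ) : ZMod k))

theorem natCast_fin_pred_injective : Injective fun j : Fin (k - 1) => ((j : ℕ) : ZMod k) :=
  fun a b h => Fin.ext <| by
    have hval := congrArg ZMod.val h
    simp only at hval
    rwa [ZMod.val_cast_of_lt (a.isLt.trans_le (k.sub_le 1)),
      ZMod.val_cast_of_lt (b.isLt.trans_le (k.sub_le 1))] at hval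

theorem image_add_natCast_fin_pred [NeZero k] (i : ZMod k) :
    univ.image (fun j : Fin (k - 1) => i + ((j : ℕ) : ZMod k)) = univ.erase (i - 1) := by
  refine eq_of_subset_of_card_le
    (image_subset_iff.2 fun j _ => mem_erase.2 ⟨fun h => ?_, mem_univ _⟩) ?_
  · have := j.isLt
    have hj : (((j + 1 : ℕ) : ZMod k)).val = 0 := by
      rw [show (((j + 1 : ℕ) : ZMod k)) = 0 by push_cast; linear_combination h, ZMod.val_zero]
    rw [ZMod.val_cast_of_lt (by omega)] at hj
    omega
  · rw [card_erase_of_mem (mem_univ _), card_univ, ZMod.card,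
      card_image_of_injective (f := fun j : Fin (k - 1) => i + ((j : ℕ) : ZMod k)) _
        ((add_right_injective i).comp natCast_fin_pred_injective),
      card_univ, Fintype.card_fin]

theorem tightCycleEdge_injective {w : ZMod k → V} (hw : Injective w) (i : ZMod k) :
    Injective (tightCycleEdge w i) :=
  hw.comp ((add_right_injective i).comp natCast_fin_pred_injective)

theorem image_tightCycleEdge [NeZero k] [DecidableEq V] {w : ZMod k → V} (hw : Injective w)
    (i : ZMod k) :
    univ.image (tightCycleEdge w i) = (univ.image w).erase (w (i - 1)) := by
  rw [← image_erase hw, ← image_add_natCast_fin_pred, image_image]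
  rfl

end TightCycle

section Forward

variable {V : Type*} [DecidableEq V] {k : ℕ} {ord : V → ℕ}

def IsRankEnumeration (ord : V → ℕ) (e : Finset V) (w : ZMod k → V) : Prop :=
  ∀ i, w i ∈ e ∧ rankIn ord e (w i) = i.val

namespace IsRankEnumeration

variable {e : Finset V} {w : ZMod k → V}

theorem lt_iff (hw : IsRankEnumeration ord e w) (a b : ZMod k) :
    ord (w a) < ord (w b) ↔ a.val < b.val := by
  rw [← (hw a).2, ← (hw b).2, rankIn_lt_rankIn_iff (hw a).1]

theorem injective [NeZero k] (hw : IsRankEnumeration ord e w) : Injective w :=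
  fun a b h => ZMod.val_injective k <| by rw [← (hw a).2, ← (hw b).2, h]

theorem image_univ [NeZero k] (hw : IsRankEnumeration ord e w) (hcard : #e = k) :
    univ.image w = e :=
  eq_of_subset_of_card_le (image_subset_iff.2 fun i _ => (hw i).1)
    (by rw [card_image_of_injective _ hw.injective, card_univ, ZMod.card, hcard])

end IsRankEnumeration

theorem exists_isRankEnumeration [NeZero k] {e : Finset V} (hord : Injective ord)
    (hcard : #e = k) : ∃ w : ZMod k → V, IsRankEnumeration ord e w := by
  choose w hw using fun i : ZMod k => exists_rankIn hord (lt_of_lt_of_eq i.val_lt hcard.symm)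
  exact ⟨w, hw⟩

def vanishingDigraph (F : Finset (Finset V)) (ord : V → ℕ) (C : Finset V → ℕ) :
    (Fin (k - 1) → V) → Option (ZMod k) := fun t =>
  if ∃ e ∈ F, ∃ w c, IsRankEnumeration ord e w ∧ t = tightCycleEdge w c
  then some ((C (univ.image t) : ZMod k) + 1) else none

variable {F : Finset (Finset V)} {C : Finset V → ℕ}

theorem exists_of_vanishingDigraph_ne_none {t : Fin (k - 1) → V}
    (ht : vanishingDigraph F ord C t ≠ none) :
    ∃ e ∈ F, ∃ w c, IsRankEnumeration ord e w ∧ t = tightCycleEdge w c := by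
  by_contra h
  exact ht (if_neg h)

variable [NeZero k]

theorem injective_of_vanishingDigraph_ne_none {t : Fin (k - 1) → V}
    (ht : vanishingDigraph F ord C t ≠ none) : Injective t := by
  obtain ⟨e, -, w, c, hw, rfl⟩ := exists_of_vanishingDigraph_ne_none ht
  exact tightCycleEdge_injective hw.injective c

theorem vanishingDigraph_tightCycleEdge (hcard : ∀ e ∈ F, #e = k)
    (hC : ∀ e ∈ F, ∀ x ∈ e, C (e.erase x) = rankIn ord e x) {e : Finset V} (he : e ∈ F)
    {w : ZMod k → V} (hw : IsRankEnumeration ord e w) (c : ZMod k) :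
    vanishingDigraph F ord C (tightCycleEdge w c) = some c := by
  rw [vanishingDigraph, if_pos ⟨e, he, w, c, hw, rfl⟩, image_tightCycleEdge hw.injective,
    hw.image_univ (hcard e he), hC e he _ (hw _).1, (hw _).2, ZMod.natCast_zmod_val,
    sub_add_cancel]

theorem exists_tightCycle_vanishingDigraph (hord : Injective ord) (hcard : ∀ e ∈ F, #e = k)
    (hC : ∀ e ∈ F, ∀ x ∈ e, C (e.erase x) = rankIn ord e x) {e : Finset V} (he : e ∈ F) :
    ∃ w : ZMod k → V, Injective w ∧ univ.image w = e ∧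
      ∀ i, vanishingDigraph F ord C (tightCycleEdge w i) = some i := by
  obtain ⟨w, hw⟩ := exists_isRankEnumeration hord (hcard e he)
  exact ⟨w, hw.injective, hw.image_univ (hcard e he),
    vanishingDigraph_tightCycleEdge hcard hC he hw⟩

theorem vanishingDigraph_simple (hord : Injective ord) (hcard : ∀ e ∈ F, #e = k)
    (hC : ∀ e ∈ F, ∀ x ∈ e, C (e.erase x) = rankIn ord e x) (t t' : Fin (k - 1) → V)
    (ht : vanishingDigraph F ord C t ≠ none) (ht' : vanishingDigraph F ord C t' ≠ none)
    (hrange : Set.range t = Set.range t') : t = t' := by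
  obtain ⟨e, he, w, c, hw, rfl⟩ := exists_of_vanishingDigraph_ne_none ht
  obtain ⟨e', he', w', c', hw', rfl⟩ := exists_of_vanishingDigraph_ne_none ht'
  have himage : univ.image (tightCycleEdge w c) = univ.image (tightCycleEdge w' c') :=
    coe_injective (by simpa using hrange)
  have hcolor : c = c' := by
    have h := vanishingDigraph_tightCycleEdge hcard hC he hw c
    have h' := vanishingDigraph_tightCycleEdge hcard hC he' hw' c'
    rw [vanishingDigraph, if_pos ⟨e, he, w, c, hw, rfl⟩, himage] at h
    rw [vanishingDigraph, if_pos ⟨e', he', w', c', hw', rfl⟩] at h'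
    exact Option.some_injective _ (h.symm.trans h')
  subst hcolor
  refine eq_of_image_univ_eq_of_lt_iff hord (tightCycleEdge_injective hw.injective c)
    (tightCycleEdge_injective hw'.injective c) himage fun a b => ?_
  simp only [tightCycleEdge, hw.lt_iff, hw'.lt_iff]

theorem lt_of_tArc_vanishingDigraph (hcard : ∀ e ∈ F, #e = k)
    (hC : ∀ e ∈ F, ∀ x ∈ e, C (e.erase x) = rankIn ord e x) {x y : V}
    (h : TArc k (vanishingDigraph F ord C) 0 x y) : ord x < ord y := by
  obtain ⟨t, hcol, a, b, hab, rfl, rfl⟩ := h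
  have hne : vanishingDigraph F ord C t ≠ none := by rcases hcol with h | h <;> simp [h]
  obtain ⟨e, he, w, c, hw, rfl⟩ := exists_of_vanishingDigraph_ne_none hne
  rw [vanishingDigraph_tightCycleEdge hcard hC he hw, zero_add] at hcol
  simp only [tightCycleEdge, hw.lt_iff]
  have hab' : (a : ℕ) < b := hab
  have hb := b.isLt
  have hval : ∀ δ : ℕ, δ ≤ 1 →
      ((δ : ZMod k) + ((a : ℕ) : ZMod k)).val < ((δ : ZMod k) + ((b : ℕ) : ZMod k)).val :=
    fun δ hδ => by
      rw [← Nat.cast_add, ← Nat.cast_add, ZMod.val_cast_of_lt (by omega),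
        ZMod.val_cast_of_lt (by omega)]
      omega
  rcases hcol with h | h <;> obtain rfl := Option.some_injective _ h
  · simpa using hval 0 zero_le_one
  · simpa using hval 1 le_rfl

end Forward

section Backward

variable {V : Type*} {k : ℕ} {D : (Fin (k - 1) → V) → Option (ZMod k)} {β : ZMod k}
  {w : ZMod k → V}

theorem tArc_tightCycleEdge_succ (hk : 3 ≤ k) (hD : ∀ i, D (tightCycleEdge w i) = some i)
    {m : ℕ} (hm : m + 1 < k) : TArc k D β (w (β + m)) (w (β + (m + 1 : ℕ))) := by
  cases m with
  | zero =>
    refine ⟨tightCycleEdge w β, Or.inl (hD β), ⟨0, by omega⟩, ⟨1, by omega⟩,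
      Fin.mk_lt_mk.2 zero_lt_one, ?_, ?_⟩ <;> simp [tightCycleEdge]
  | succ m =>
    refine ⟨tightCycleEdge w (β + 1), Or.inr (hD (β + 1)), ⟨m, by omega⟩, ⟨m + 1, by omega⟩,
      Fin.mk_lt_mk.2 m.lt_succ_self, ?_, ?_⟩ <;> simp only [tightCycleEdge] <;> congr 1 <;>
      push_cast <;> ring

theorem rankIn_tightCycle [NeZero k] [DecidableEq V] (hk : 3 ≤ k) {ord : V → ℕ}
    (harc : ∀ x y, TArc k D β x y → ord x < ord y) (hD : ∀ i, D (tightCycleEdge w i) = some i)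
    (i : ZMod k) : rankIn ord (univ.image w) (w i) = (i - β).val := by
  let u : ℕ → V := fun m => w (β + m)
  have hmono : StrictMonoOn (ord ∘ u) (Set.Iio k) :=
    (strictMonoOn_Iic_of_lt_succ (n := k - 1) fun m hm => by
      rw [Order.succ_eq_add_one]
      exact harc _ _ (tArc_tightCycleEdge_succ hk hD (by omega))).mono
      fun m hm => Nat.le_sub_one_of_lt hm
  have himage : (range k).image u = univ.image w := by
    refine Subset.antisymm (image_subset_iff.2 fun m _ => mem_image_of_mem w (mem_univ _)) ?_
    refine image_subset_iff.2 fun j _ => mem_image.2 ⟨(j - β).val, by simp [ZMod.val_lt], ?_⟩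
    simp [u]
  have hi : w i = u (i - β).val := by simp [u]
  rw [← himage, hi, rankIn_image_range hmono (ZMod.val_lt _)]

theorem hasVanishingOrdering_of_tightCycles [NeZero k] [Finite V] [DecidableEq V] (hk : 3 ≤ k)
    {F : Finset (Finset V)}
    (hsimp : ∀ t t', D t ≠ none → D t' ≠ none → Set.range t = Set.range t' → t = t')
    (hcyc : ∀ e ∈ F, ∃ w : ZMod k → V, Injective w ∧ univ.image w = e ∧
      ∀ i, D (tightCycleEdge w i) = some i)
    (hacyc : ∀ x, ¬ TransGen (TArc k D β) x x) : HasVanishingOrdering k F := by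
  obtain ⟨ord, hord, harc⟩ := exists_injective_nat_of_acyclic (TArc k D β) hacyc
  obtain ⟨col, hcol⟩ := exists_color_of_simple D hsimp
  refine ⟨ord, hord, fun S => (col S - 1 - β).val, fun S => ZMod.val_lt _, ?_⟩
  intro e he x hx
  obtain ⟨w, hw, rfl, hD⟩ := hcyc e he
  obtain ⟨i, -, rfl⟩ := mem_image.1 hx
  have herase : (univ.image w).erase (w i) = univ.image (tightCycleEdge w (i + 1)) := by
    rw [image_tightCycleEdge hw, add_sub_cancel_right]
  change (col _ - 1 - β).val = _
  rw [herase, hcol _ _ (hD (i + 1)), rankIn_tightCycle hk harc hD, add_sub_cancel_right]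

end Backward

/-- Lemma 6.1. For `k ≥ 3`, a `k`-graph `F` has a vanishing ordering
of its vertices if and only if there is a `k`-edge-colored simple `(k−1)`-uniform
directed hypergraph `D` on `V(F)` (encoded as `D : (Fin (k−1) → V) → Option (ZMod k)`,
whose present directed edges are injective tuples, with at most one ordering of each
`(k−1)`-set present) such that every `k`-edge of `F` corresponds to a directed tight
`(k−1)`-uniform cycle of length `k` whose `k` directed edges are colored `0,1,…,k−1` in
cyclic order, and for some two consecutive colors `β, β+1 ∈ ℤ_k` the transitive digraph
`T(D_{β,β+1})` contains no directed cycles. -/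
theorem stmt6 (k f : ℕ) [NeZero k] (hk : 3 ≤ k)
    (F : Finset (Finset (Fin f))) (hF : ∀ e ∈ F, e.card = k) :
    HasVanishingOrdering k F ↔
      ∃ D : (Fin (k - 1) → Fin f) → Option (ZMod k),
        (∀ t, D t ≠ none → Function.Injective t) ∧
        (∀ t t', D t ≠ none → D t' ≠ none → Set.range t = Set.range t' → t = t') ∧
        (∀ e ∈ F, ∃ w : ZMod k → Fin f, Function.Injective w ∧
          Finset.univ.image w = e ∧
          ∀ i : ZMod k, D (fun j : Fin (k - 1) => w (i + ((j : ℕ) : ZMod k))) = some i) ∧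
        (∃ β : ZMod k, ∀ x : Fin f, ¬ Relation.TransGen (TArc k D β) x x) := by
  constructor
  · rintro ⟨ord, hord, C, -, hC⟩
    exact ⟨vanishingDigraph F ord C, fun _ => injective_of_vanishingDigraph_ne_none,
      vanishingDigraph_simple hord hF hC,
      fun _ he => exists_tightCycle_vanishingDigraph hord hF hC he,
      0, not_transGen_self_of_lt ord fun _ _ => lt_of_tArc_vanishingDigraph hF hC⟩
  · rintro ⟨D, -, hsimp, hcyc, β, hacyc⟩
    exact hasVanishingOrdering_of_tightCycles hk hsimp hcyc hacyc

end
end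

section
/- Let k ≥ 3 and t ≥ k−2, and let F_t^{(k)} be the k-graph on vertices a_1,…,a_{k−1}, b_0,…,b_t, c_0,…,c_t, d_0,…,d_t consisting of the three tight k-uniform paths (a_1,…,a_{k−1},b_0,…,b_t,c_t), (a_1,…,a_{k−1},c_0,…,c_t,d_t), and (a_1,…,a_{k−1},d_0,…,d_t,b_t). Then F_t^{(k)} has no vanishing ordering of its vertices. -/
open scoped Classical BigOperators

noncomputable section

/-- The vertex set of `F_t^{(k)}`: the vertices `a_1, …, a_{k−1}` (left summand) and the
vertices `x_r` for `x ∈ {b, c, d}` (encoded `0, 1, 2 : Fin 3`) and `0 ≤ r ≤ t`. -/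
abbrev Vtx (k t : ℕ) := Fin (k - 1) ⊕ (Fin 3 × Fin (t + 1))

/-- The `i`-th vertex (0-based) of the tight path
`(a_1, …, a_{k−1}, x_0, x_1, …, x_t, (x+1)_t)` of `F_t^{(k)}`, for `x ∈ {b, c, d}`. -/
def pathSeq (k t : ℕ) (x : Fin 3) (i : ℕ) : Vtx k t :=
  if h : i < k - 1 then Sum.inl ⟨i, h⟩
  else if h2 : i < k - 1 + (t + 1) then Sum.inr (x, ⟨i - (k - 1), by omega⟩)
  else Sum.inr (x + 1, Fin.last t)

/-- The `k`-graph `F_t^{(k)}`: the union of the edges of the three tight `k`-uniform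
paths `(a_1,…,a_{k−1},b_0,…,b_t,c_t)`, `(a_1,…,a_{k−1},c_0,…,c_t,d_t)` and
`(a_1,…,a_{k−1},d_0,…,d_t,b_t)`, each of length `t+k+1`; the edge starting at position
`i` (for `0 ≤ i ≤ t+1`) consists of the `k` consecutive vertices at positions
`i, …, i+k−1`. -/
def Fkt (k t : ℕ) : Finset (Finset (Vtx k t)) :=
  Finset.univ.image (fun p : Fin 3 × Fin (t + 2) =>
    (Finset.range k).image (fun j => pathSeq k t p.1 ((p.2 : ℕ) + j)))

/-
If `e, f` are edges with `e ∖ {x} = f ∖ {y}`, the vanishing condition gives `x` and `y` the same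
rank over this common `(k-1)`-set, so they lie in the same gap of it. For consecutive edges of a
tight path `u` this says that `u p` and `u (p + k)` compare alike with every `u q`, `p < q < p + k`;
hence the relative order of two vertices at distance less than `k` along the path is determined
by the order of the first edge. The first edges of the three paths share the set
`{a_1, …, a_{k-1}}`, so `b_0, c_0, d_0` lie in the same gap of it and the three paths have the same
order pattern. Comparing the last two vertices of each path gives
`b_t < c_t ↔ c_t < d_t ↔ d_t < b_t`, which is impossible for three distinct values.
-/

theorem Finset.image_erase_of_injOn {α β : Type*} [DecidableEq α] [DecidableEq β] {f : α → β}
    {s : Finset α} {a : α} (hf : Set.InjOn f s) (ha : a ∈ s) :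
    (s.image f).erase (f a) = (s.erase a).image f := by
  ext b
  simp only [Finset.mem_erase, Finset.mem_image]
  constructor
  · rintro ⟨hb, c, hc, rfl⟩
    exact ⟨c, ⟨fun hca => hb (hca ▸ rfl), hc⟩, rfl⟩
  · rintro ⟨c, ⟨hca, hc⟩, rfl⟩
    exact ⟨fun h => hca (hf hc ha h), c, hc, rfl⟩

theorem lt_iff_lt_of_card_filter_lt_eq {V β : Type*} [LinearOrder β] (f : V → β) {S : Finset V}
    {a b : β} (h : (S.filter fun y => f y < a).card = (S.filter fun y => f y < b).card)
    {z : V} (hz : z ∈ S) : f z < a ↔ f z < b := by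
  have of_le : ∀ {a b : β}, a ≤ b →
      (S.filter fun y => f y < a).card = (S.filter fun y => f y < b).card → f z < b → f z < a := by
    intro a b hab h hzb
    have hsub : S.filter (fun y => f y < a) ⊆ S.filter (fun y => f y < b) :=
      Finset.monotone_filter_right S fun _ _ hy => hy.trans_le hab
    have hz' : z ∈ S.filter (fun y => f y < a) :=
      (Finset.eq_of_subset_of_card_le hsub h.ge) ▸ Finset.mem_filter.2 ⟨hz, hzb⟩
    exact (Finset.mem_filter.1 hz').2
  rcases le_total a b with hab | hab
  · exact ⟨fun hza => hza.trans_le hab, of_le hab h⟩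
  · exact ⟨of_le hab h.symm, fun hzb => hzb.trans_le hab⟩

theorem rankIn_eq_card_filter_erase {V : Type*} [DecidableEq V] (ord : V → ℕ) (e : Finset V)
    (x : V) : rankIn ord e x = ((e.erase x).filter fun y => ord y < ord x).card := by
  rw [rankIn, Finset.filter_erase, Finset.erase_eq_of_notMem (by simp)]

theorem IsVanishing.lt_iff_lt_of_erase_eq {V : Type*} [DecidableEq V] {k : ℕ}
    {F : Finset (Finset V)} {ord : V → ℕ} (hF : IsVanishing k F ord) {e f : Finset V}
    (he : e ∈ F) (hf : f ∈ F) {x y : V} (hx : x ∈ e) (hy : y ∈ f) (hef : e.erase x = f.erase y)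
    {z : V} (hz : z ∈ e.erase x) : ord z < ord x ↔ ord z < ord y := by
  obtain ⟨C, -, hC⟩ := hF
  refine lt_iff_lt_of_card_filter_lt_eq ord ?_ hz
  rw [← rankIn_eq_card_filter_erase, ← hC e he x hx, hef, hC f hf y hy,
    rankIn_eq_card_filter_erase]

section TightPath

variable {V : Type*} [DecidableEq V]

def tightEdge (u : ℕ → V) (k p : ℕ) : Finset V :=
  (Finset.range k).image fun j => u (p + j)

theorem tightEdge_eq_image_Ico (u : ℕ → V) (k p : ℕ) :
    tightEdge u k p = (Finset.Ico p (p + k)).image u := by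
  have hIco : Finset.Ico p (p + k) = (Finset.Ico 0 k).image (p + ·) := by
    rw [Finset.image_add_left_Ico, Nat.add_zero]
  rw [hIco, Finset.image_image, tightEdge, Finset.range_eq_Ico]
  rfl

theorem tightEdge_erase {u : ℕ → V} {k p q : ℕ} (hu : Set.InjOn u (Set.Ico p (p + k)))
    (hq : q ∈ Finset.Ico p (p + k)) :
    (tightEdge u k p).erase (u q) = ((Finset.Ico p (p + k)).erase q).image u := by
  rw [tightEdge_eq_image_Ico]
  exact Finset.image_erase_of_injOn (by rwa [Finset.coe_Ico]) hq

theorem IsVanishing.lt_iff_lt_of_tightEdge {k : ℕ} {F : Finset (Finset V)} {ord : V → ℕ}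
    (hF : IsVanishing k F ord) {u : ℕ → V} {p q : ℕ} (hu : Set.InjOn u (Set.Icc p (p + k)))
    (h₀ : tightEdge u k p ∈ F) (h₁ : tightEdge u k (p + 1) ∈ F) (hpq : p < q) (hqk : q < p + k) :
    ord (u q) < ord (u p) ↔ ord (u q) < ord (u (p + k)) := by
  have hfirst : p ∈ Finset.Ico p (p + k) := Finset.mem_Ico.2 ⟨le_rfl, by omega⟩
  have hlast : p + k ∈ Finset.Ico (p + 1) (p + 1 + k) := Finset.mem_Ico.2 ⟨by omega, by omega⟩
  have hu₀ : Set.InjOn u (Set.Ico p (p + k)) :=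
    hu.mono fun _ hi => by simp only [Set.mem_Ico, Set.mem_Icc] at hi ⊢; omega
  have hu₁ : Set.InjOn u (Set.Ico (p + 1) (p + 1 + k)) :=
    hu.mono fun _ hi => by simp only [Set.mem_Ico, Set.mem_Icc] at hi ⊢; omega
  have hshadow :
      (Finset.Ico p (p + k)).erase p = (Finset.Ico (p + 1) (p + 1 + k)).erase (p + k) := by
    ext i; simp only [Finset.mem_erase, Finset.mem_Ico]; omega
  refine hF.lt_iff_lt_of_erase_eq h₀ h₁ ?_ ?_ ?_ ?_
  · rw [tightEdge_eq_image_Ico]; exact Finset.mem_image_of_mem u hfirst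
  · rw [tightEdge_eq_image_Ico]; exact Finset.mem_image_of_mem u hlast
  · rw [tightEdge_erase hu₀ hfirst, tightEdge_erase hu₁ hlast, hshadow]
  · rw [tightEdge_erase hu₀ hfirst]
    exact Finset.mem_image_of_mem u (by simp only [Finset.mem_erase, Finset.mem_Ico]; omega)

end TightPath

def EndsShareGap {β : Type*} [LinearOrder β] (k N : ℕ) (w : ℕ → β) : Prop :=
  ∀ p q, p + k ≤ N → p < q → q < p + k → (w q < w p ↔ w q < w (p + k))

theorem lt_iff_lt_of_endsShareGap {β : Type*} [LinearOrder β] {k N : ℕ} {w w' : ℕ → β}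
    (hw : Set.InjOn w (Set.Iic N)) (hw' : Set.InjOn w' (Set.Iic N))
    (hg : EndsShareGap k N w) (hg' : EndsShareGap k N w')
    (hbase : ∀ i j, i < j → j < k → (w i < w j ↔ w' i < w' j))
    {i j : ℕ} (hjN : j ≤ N) (hij : i < j) (hjk : j < i + k) : w i < w j ↔ w' i < w' j := by
  induction j using Nat.strong_induction_on generalizing i with
  | _ j ih =>
    by_cases hj : j < k
    · exact hbase i j hij hj
    obtain ⟨p, rfl⟩ : ∃ p, j = p + k := ⟨j - k, by omega⟩
    have hne : ∀ {v : ℕ → β}, Set.InjOn v (Set.Iic N) → v i ≠ v p := fun hv h => by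
      have := hv (Set.mem_Iic.2 (by omega)) (Set.mem_Iic.2 (by omega)) h
      omega
    calc w i < w (p + k) ↔ w i < w p := (hg p i hjN (by omega) (by omega)).symm
      _ ↔ ¬ w p < w i := by rw [not_lt, (hne hw).le_iff_lt]
      _ ↔ ¬ w' p < w' i := (ih i (by omega) (by omega) (by omega) (by omega)).not
      _ ↔ w' i < w' p := by rw [not_lt, (hne hw').le_iff_lt]
      _ ↔ w' i < w' (p + k) := hg' p i hjN (by omega) (by omega)

theorem pathSeq_of_lt {k t i : ℕ} (x : Fin 3) (h : i < k - 1) :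
    pathSeq k t x i = Sum.inl ⟨i, h⟩ := by
  rw [pathSeq, dif_pos h]

theorem pathSeq_add_sub_one {k t : ℕ} (hk : 0 < k) (x : Fin 3) :
    pathSeq k t x (k + t - 1) = Sum.inr (x, Fin.last t) := by
  rw [pathSeq, dif_neg (by omega), dif_pos (by omega)]
  congr
  omega

theorem pathSeq_add {k t : ℕ} (hk : 0 < k) (x : Fin 3) :
    pathSeq k t x (k + t) = Sum.inr (x + 1, Fin.last t) := by
  rw [pathSeq, dif_neg (by omega), dif_neg (by omega)]

theorem pathSeq_injOn (k t : ℕ) (x : Fin 3) : Set.InjOn (pathSeq k t x) (Set.Iic (k + t)) := by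
  intro i hi j hj h
  simp only [Set.mem_Iic] at hi hj
  unfold pathSeq at h
  split_ifs at h <;>
    simp only [Sum.inl.injEq, Sum.inr.injEq, Prod.mk.injEq, Fin.mk.injEq, true_and,
      left_eq_add, add_eq_left, one_ne_zero, false_and] at h <;> omega

theorem tightEdge_pathSeq_mem_Fkt {k t p : ℕ} (x : Fin 3) (hp : p ≤ t + 1) :
    tightEdge (pathSeq k t x) k p ∈ Fkt k t :=
  Finset.mem_image.2 ⟨(x, ⟨p, by omega⟩), Finset.mem_univ _, rfl⟩

section Vanishing

variable {k t : ℕ} {ord : Vtx k t → ℕ}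

theorem endsShareGap_pathSeq (hF : IsVanishing k (Fkt k t) ord) (x : Fin 3) :
    EndsShareGap k (k + t) (ord ∘ pathSeq k t x) := fun p _ hpN hpq hqk =>
  hF.lt_iff_lt_of_tightEdge ((pathSeq_injOn k t x).mono fun _ hi => by
    simp only [Set.mem_Icc, Set.mem_Iic] at hi ⊢; omega)
    (tightEdge_pathSeq_mem_Fkt x (by omega)) (tightEdge_pathSeq_mem_Fkt x (by omega)) hpq hqk

theorem pathSeq_lt_iff_lt_of_lt (hF : IsVanishing k (Fkt k t) ord) (x y : Fin 3) {i j : ℕ}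
    (hij : i < j) (hjk : j < k) :
    ord (pathSeq k t x i) < ord (pathSeq k t x j) ↔
      ord (pathSeq k t y i) < ord (pathSeq k t y j) := by
  have hi : pathSeq k t x i = pathSeq k t y i := by
    rw [pathSeq_of_lt x (by omega), pathSeq_of_lt y (by omega)]
  by_cases hj : j < k - 1
  · rw [hi, pathSeq_of_lt x hj, pathSeq_of_lt y hj]
  obtain rfl : j = k - 1 := by omega
  have hinj : ∀ z : Fin 3, Set.InjOn (pathSeq k t z) (Set.Ico 0 (0 + k)) :=
    fun z => (pathSeq_injOn k t z).mono fun _ hl => by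
      simp only [Set.mem_Ico, Set.mem_Iic] at hl ⊢; omega
  have hj : k - 1 ∈ Finset.Ico 0 (0 + k) := Finset.mem_Ico.2 ⟨by omega, by omega⟩
  have hmem : ∀ z : Fin 3, pathSeq k t z (k - 1) ∈ tightEdge (pathSeq k t z) k 0 := fun z => by
    rw [tightEdge_eq_image_Ico]; exact Finset.mem_image_of_mem _ hj
  have hshadow : (tightEdge (pathSeq k t x) k 0).erase (pathSeq k t x (k - 1)) =
      (tightEdge (pathSeq k t y) k 0).erase (pathSeq k t y (k - 1)) := by
    rw [tightEdge_erase (hinj x) hj, tightEdge_erase (hinj y) hj]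
    refine Finset.image_congr fun l hl => ?_
    rw [Finset.mem_coe, Finset.mem_erase, Finset.mem_Ico] at hl
    rw [pathSeq_of_lt x (by omega), pathSeq_of_lt y (by omega)]
  rw [← hi]
  refine hF.lt_iff_lt_of_erase_eq (tightEdge_pathSeq_mem_Fkt x (by omega))
    (tightEdge_pathSeq_mem_Fkt y (by omega)) (hmem x) (hmem y) hshadow ?_
  rw [tightEdge_erase (hinj x) hj]
  exact Finset.mem_image_of_mem _ (by simp only [Finset.mem_erase, Finset.mem_Ico]; omega)

end Vanishing

theorem stmt7_general (k t : ℕ) (hk : 3 ≤ k) :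
    ¬ HasVanishingOrdering k (Fkt k t) := by
  rintro ⟨ord, hord, hF⟩
  have hw : ∀ x, Set.InjOn (ord ∘ pathSeq k t x) (Set.Iic (k + t)) :=
    fun x => hord.comp_injOn (pathSeq_injOn k t x)
  have hlast : ∀ x y : Fin 3,
      ord (pathSeq k t x (k + t - 1)) < ord (pathSeq k t x (k + t)) ↔
        ord (pathSeq k t y (k + t - 1)) < ord (pathSeq k t y (k + t)) := fun x y =>
    lt_iff_lt_of_endsShareGap (hw x) (hw y) (endsShareGap_pathSeq hF x)
      (endsShareGap_pathSeq hF y) (fun _ _ => pathSeq_lt_iff_lt_of_lt hF x y) le_rfl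
      (by omega) (by omega)
  simp only [pathSeq_add_sub_one (show 0 < k by omega), pathSeq_add (show 0 < k by omega)]
    at hlast
  have hbc := hlast 0 1
  have hcd := hlast 1 2
  have hne : ∀ x y : Fin 3, x ≠ y →
      ord (Sum.inr (x, Fin.last t)) ≠ ord (Sum.inr (y, Fin.last t)) :=
    fun x y hxy h => hxy (by simpa using hord h)
  have hne01 := hne 0 1 (by decide)
  have hne12 := hne 1 2 (by decide)
  have hne02 := hne 0 2 (by decide)
  simp only [Fin.reduceAdd] at hbc hcd
  omega

/-- part of Theorem 1.11. For `k ≥ 3` and `t ≥ k − 2`, the `k`-graph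
`F_t^{(k)}` has no vanishing ordering of its vertices. -/
theorem stmt7 (k t : ℕ) (hk : 3 ≤ k) (ht : k - 2 ≤ t) :
    ¬ HasVanishingOrdering k (Fkt k t) :=
  stmt7_general k t hk

end
end

section
/- Let ε ∈ (0, 1/2), k ≥ 3, ρ₀ = ε·k^{1−k}, and let t_1, …, t_k ∈ [0,1] with ∑_{ℓ=1}^k t_ℓ < 1 + ρ₀·binom(k,2). Suppose A is a k-partite k-graph with parts P_1, …, P_k such that for each ℓ ∈ [k], the set of vertices v ∈ P_ℓ contained in at least ρ₀·binom(k,2)·∏_{j≠ℓ}|P_j| edges has size less than (t_ℓ + ρ₀·binom(k,2))·|P_ℓ|. Then |E(A)| < (k^{−k} + ε)·∏_{ℓ=1}^k |P_ℓ|. -/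
/-!
Let `Dₗ ⊆ Pₗ` be the vertices of degree at least `c ∏_{j ≠ ℓ} |Pⱼ|`, where `c = ρ₀ binom(k,2)`,
and `dₗ = |Dₗ| / |Pₗ|`. An edge either lies in `∏ Dₗ`, or meets some `Pₗ \ Dₗ`, whose vertices have
low degree; hence `|E| ≤ (∏ dₗ + c ∑ (1 - dₗ)) ∏ |Pₗ|`, with `∑ dₗ ≤ 1 + (k + 1) c` by the
hypothesis on the `tₗ`. By AM-GM the bracket is at most `(s / k)^k + c (k - s)` for `s = ∑ dₗ`, a
convex function of `s`, so it suffices to check the bound at `s = 0` and at `s = 1 + (k + 1) c`.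
For `k ≥ 4` both values are at most `k^{-k} + 3ε/4`; the case `k = 3`, where `c k = ε`, is an
explicit cubic inequality in `ε`.
-/

open Finset

section Transversal

variable {ι α : Type*} [DecidableEq α]

theorem card_le_prod_card_add_sum_card_filter [Fintype ι] [DecidableEq ι] (D : ι → Finset α)
    (E : Finset (ι → α)) : #E ≤ ∏ i, #(D i) + ∑ i, #{e ∈ E | e i ∉ D i} := by
  have hcover : E ⊆ Fintype.piFinset D ∪ univ.biUnion fun i => {e ∈ E | e i ∉ D i} := by
    intro e he
    by_cases h : ∀ i, e i ∈ D i
    · exact mem_union_left _ (Fintype.mem_piFinset.2 h)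
    · obtain ⟨i, hi⟩ := not_forall.1 h
      exact mem_union_right _ (mem_biUnion.2 ⟨i, mem_univ i, mem_filter.2 ⟨he, hi⟩⟩)
  calc #E ≤ _ := card_le_card hcover
    _ ≤ _ := by exact card_union_le _ _
    _ ≤ ∏ i, #(D i) + ∑ i, #{e ∈ E | e i ∉ D i} := by
        rw [Fintype.card_piFinset]; gcongr; exact card_biUnion_le

theorem card_filter_apply_notMem_le {P D : ι → Finset α} {E : Finset (ι → α)}
    (hE : ∀ e ∈ E, ∀ i, e i ∈ P i) (i : ι) {M : ℝ}
    (hM : ∀ v ∈ P i \ D i, (#{e ∈ E | e i = v} : ℝ) ≤ M) :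
    (#{e ∈ E | e i ∉ D i} : ℝ) ≤ #(P i \ D i) * M := by
  rw [card_eq_sum_card_fiberwise (f := fun e : ι → α => e i) (t := P i \ D i) fun e he => by
    rw [mem_coe, mem_filter] at he
    exact mem_sdiff.2 ⟨hE e he.1 i, he.2⟩]
  push_cast
  rw [← nsmul_eq_mul]
  refine sum_le_card_nsmul _ _ _ fun v hv => (hM v hv).trans' ?_
  exact_mod_cast card_le_card fun e he => by simp only [mem_filter] at he ⊢; exact ⟨he.1.1, he.2⟩

theorem card_le_prod_density_add_mul_sum [Fintype ι] [DecidableEq ι] {P D : ι → Finset α}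
    {E : Finset (ι → α)} (hE : ∀ e ∈ E, ∀ i, e i ∈ P i) (hP : ∀ i, (P i).Nonempty)
    (hD : ∀ i, D i ⊆ P i) (c : ℝ)
    (hlow : ∀ i, ∀ v ∈ P i \ D i,
      (#{e ∈ E | e i = v} : ℝ) ≤ c * ∏ j ∈ univ.erase i, (#(P j) : ℝ)) :
    (#E : ℝ) ≤ (∏ i, ((#(D i) : ℝ) / #(P i)) + c * ∑ i, (1 - (#(D i) : ℝ) / #(P i)))
      * ∏ i, (#(P i) : ℝ) := by
  have hP0 : ∀ i, (#(P i) : ℝ) ≠ 0 := fun i => by exact_mod_cast (hP i).card_ne_zero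
  have hlow_edges : ∀ i, (#{e ∈ E | e i ∉ D i} : ℝ)
      ≤ c * (1 - (#(D i) : ℝ) / #(P i)) * ∏ j, (#(P j) : ℝ) := fun i => by
    have hsdiff : (#(P i \ D i) : ℝ) = (1 - (#(D i) : ℝ) / #(P i)) * #(P i) := by
      rw [card_sdiff_of_subset (hD i), Nat.cast_sub (card_le_card (hD i)), sub_mul, one_mul,
        div_mul_cancel₀ _ (hP0 i)]
    refine (card_filter_apply_notMem_le hE i (hlow i)).trans_eq ?_
    rw [hsdiff, ← mul_prod_erase univ (fun j => (#(P j) : ℝ)) (mem_univ i)]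
    ring
  calc (#E : ℝ) ≤ ∏ i, (#(D i) : ℝ) + ∑ i, (#{e ∈ E | e i ∉ D i} : ℝ) := by
        exact_mod_cast card_le_prod_card_add_sum_card_filter D E
    _ ≤ ∏ i, ((#(D i) : ℝ) / #(P i) * #(P i))
          + ∑ i, c * (1 - (#(D i) : ℝ) / #(P i)) * ∏ j, (#(P j) : ℝ) := by
        gcongr with i
        · exact (div_mul_cancel₀ _ (hP0 i)).ge
        · exact hlow_edges i
    _ = _ := by rw [prod_mul_distrib, ← sum_mul, ← mul_sum]; ring

end Transversal

theorem prod_le_sum_div_card_pow {ι : Type*} (s : Finset ι) (d : ι → ℝ)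
    (hd : ∀ i ∈ s, 0 ≤ d i) : ∏ i ∈ s, d i ≤ ((∑ i ∈ s, d i) / #s) ^ #s := by
  rcases s.eq_empty_or_nonempty with rfl | hs
  · simp
  have amgm := Real.geom_mean_le_arith_mean s (fun _ => 1) d (fun _ _ => zero_le_one)
    (by simpa using hs) hd
  simp only [Real.rpow_one, sum_const, nsmul_eq_mul, mul_one, one_mul] at amgm
  calc ∏ i ∈ s, d i = ((∏ i ∈ s, d i) ^ (#s : ℝ)⁻¹) ^ #s :=
        (Real.rpow_inv_natCast_pow (prod_nonneg hd) hs.card_ne_zero).symm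
    _ ≤ ((∑ i ∈ s, d i) / #s) ^ #s := by gcongr; exact Real.rpow_nonneg (prod_nonneg hd) _

theorem pow_div_add_mul_sub_le_max {k : ℕ} (hk : k ≠ 0) (c : ℝ) {s S : ℝ}
    (hs : s ∈ Set.Icc 0 S) :
    (s / k) ^ k + c * (k - s) ≤ max (c * k) ((S / k) ^ k + c * (k - S)) := by
  have hpow : ConvexOn ℝ (Set.Ici 0) fun x : ℝ => (x / k) ^ k := by
    refine ((convexOn_pow k).smul (by positivity : (0 : ℝ) ≤ ((k : ℝ) ^ k)⁻¹)).congr ?_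
    intro x _
    simp only [smul_eq_mul]
    ring
  have hlin : ConvexOn ℝ (Set.Ici 0) fun x : ℝ => c * (k - x) :=
    ⟨convex_Ici 0, fun x _ y _ a b _ _ hab => le_of_eq (by
      simp only [smul_eq_mul]; linear_combination (-(c * k)) * hab)⟩
  simpa [zero_pow hk] using
    (hpow.add hlin).le_max_of_mem_Icc Set.self_mem_Ici (hs.1.trans hs.2) hs

theorem pow_div_add_mul_sub_le_of_four_le {k : ℕ} (hk : 4 ≤ k) {c : ℝ} (hc : 0 ≤ c)
    (hc1 : (k + 1) * c ≤ 1) :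
    ((1 + (k + 1) * c) / k) ^ k + c * (k - (1 + (k + 1) * c))
      ≤ ((k : ℝ) ^ k)⁻¹ + c * (3 * k + 1) / 2 := by
  set x := (k + 1) * c with hxc
  have hk' : (4 : ℝ) ≤ k := by exact_mod_cast hk
  have hx : 0 ≤ x := by positivity
  have hSk : (1 + x) / k ≤ 1 / 2 := by rw [div_le_iff₀ (by positivity)]; linarith
  have hSk0 : 0 ≤ (1 + x) / k := by positivity
  have hle : 1 / (k : ℝ) ≤ (1 + x) / k := by gcongr; linarith
  have hmvt : ((1 + x) / k) ^ k - (1 / k) ^ k ≤ x / 2 := by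
    have h := abs_pow_sub_pow_le ((1 + x) / k) (1 / k) k
    rw [abs_of_nonneg (sub_nonneg.2 (pow_le_pow_left₀ (by positivity) hle k)),
      abs_of_nonneg (sub_nonneg.2 hle), abs_of_nonneg hSk0, abs_of_nonneg (by positivity),
      max_eq_left hle] at h
    calc _ ≤ _ := h
      _ = x * ((1 + x) / k) ^ (k - 1) := by field_simp; ring
      _ ≤ x * (1 / 2) := by
          gcongr
          exact (pow_le_of_le_one hSk0 (hSk.trans (by norm_num)) (by omega)).trans hSk
      _ = x / 2 := by ring
  rw [one_div, inv_pow] at hmvt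
  nlinarith [mul_nonneg hc hx]

theorem choose_two_div_pow_pred_le {k : ℕ} (hk : 4 ≤ k) :
    (k.choose 2 : ℝ) / (k : ℝ) ^ (k - 1) ≤ (k - 1) / (2 * k ^ 2) := by
  have hk' : (4 : ℝ) ≤ k := by exact_mod_cast hk
  rw [Nat.cast_choose_two, div_le_div_iff₀ (by positivity) (by positivity)]
  calc (k : ℝ) * (k - 1) / 2 * (2 * k ^ 2) = ((k : ℝ) - 1) * (k : ℝ) ^ 3 := by ring
    _ ≤ ((k : ℝ) - 1) * (k : ℝ) ^ (k - 1) := by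
        gcongr
        · linarith
        · linarith
        · omega

theorem prod_add_mul_sum_one_sub_lt {k : ℕ} (hk : 3 ≤ k) {ε : ℝ} (hε : 0 < ε) (hε2 : ε < 1 / 2)
    {c : ℝ} (hc : c = ε / (k : ℝ) ^ (k - 1) * k.choose 2) (d : Fin k → ℝ) (hd : ∀ i, 0 ≤ d i)
    (hsum : ∑ i, d i ≤ 1 + (k + 1) * c) :
    ∏ i, d i + c * ∑ i, (1 - d i) < ((k : ℝ) ^ k)⁻¹ + ε := by
  set S := 1 + (k + 1) * c
  have hmax : ∏ i, d i + c * ∑ i, (1 - d i) ≤ max (c * k) ((S / k) ^ k + c * (k - S)) := by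
    have amgm := prod_le_sum_div_card_pow univ d fun i _ => hd i
    rw [card_univ, Fintype.card_fin] at amgm
    rw [sum_sub_distrib, sum_const, card_univ, Fintype.card_fin, nsmul_one]
    exact (add_le_add_left amgm _).trans
      (pow_div_add_mul_sub_le_max (by omega) c ⟨sum_nonneg fun i _ => hd i, hsum⟩)
  suffices c * k < ((k : ℝ) ^ k)⁻¹ + ε ∧ (S / k) ^ k + c * (k - S) < ((k : ℝ) ^ k)⁻¹ + ε from
    hmax.trans_lt (max_lt this.1 this.2)
  have hkk : (0 : ℝ) < ((k : ℝ) ^ k)⁻¹ := by positivity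
  rcases hk.eq_or_lt with rfl | hk4
  · norm_num [Nat.choose] at hc
    subst hc
    constructor <;> norm_num [S] <;> nlinarith [pow_pos hε 3]
  · have hc0 : 0 ≤ c := by rw [hc]; positivity
    have hck : c ≤ ε * ((k - 1) / (2 * k ^ 2)) := by
      rw [hc, div_mul_eq_mul_div, mul_div_assoc]
      exact mul_le_mul_of_nonneg_left (choose_two_div_pow_pred_le hk4) hε.le
    have hk' : (4 : ℝ) ≤ k := by exact_mod_cast hk4
    have hsmall : c * (3 * k + 1) / 2 < ε := by
      calc c * (3 * k + 1) / 2 ≤ ε * ((k - 1) / (2 * k ^ 2)) * (3 * k + 1) / 2 := by gcongr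
        _ = ε * ((k - 1) * (3 * k + 1) / (4 * k ^ 2)) := by ring
        _ < ε * 1 := by gcongr; rw [div_lt_one (by positivity)]; nlinarith
        _ = ε := mul_one ε
    have hc1 : (k + 1) * c ≤ 1 := by
      calc (k + 1) * c ≤ (k + 1) * (ε * ((k - 1) / (2 * k ^ 2))) := by gcongr
        _ = ε * ((k ^ 2 - 1) / (2 * k ^ 2)) := by ring
        _ ≤ ε * 1 := by gcongr; rw [div_le_one (by positivity)]; nlinarith
        _ ≤ 1 := by linarith
    exact ⟨by nlinarith, (pow_div_add_mul_sub_le_of_four_le hk4 hc0 hc1).trans_lt (by linarith)⟩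

theorem stmt8_general {α : Type*} [DecidableEq α] (k : ℕ) (hk : 3 ≤ k)
    (ε : ℝ) (hε : 0 < ε) (hε2 : ε < 1 / 2)
    (ρ₀ : ℝ) (hρ₀ : ρ₀ = ε / (k : ℝ) ^ (k - 1))
    (t : Fin k → ℝ)
    (htsum : ∑ ℓ, t ℓ < 1 + ρ₀ * (k.choose 2 : ℝ))
    (P : Fin k → Finset α) (hPne : ∀ ℓ, (P ℓ).Nonempty)
    (E : Finset (Fin k → α)) (hE : ∀ e ∈ E, ∀ ℓ, e ℓ ∈ P ℓ)
    (hdeg : ∀ ℓ : Fin k,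
      ((((P ℓ).filter (fun v =>
          ρ₀ * (k.choose 2 : ℝ) * ∏ j ∈ Finset.univ.erase ℓ, ((P j).card : ℝ)
            ≤ ((E.filter (fun e => e ℓ = v)).card : ℝ))).card : ℝ)
        < (t ℓ + ρ₀ * (k.choose 2 : ℝ)) * ((P ℓ).card : ℝ))) :
    (E.card : ℝ) < (((k : ℝ) ^ k)⁻¹ + ε) * ∏ ℓ, ((P ℓ).card : ℝ) := by
  set c := ρ₀ * (k.choose 2 : ℝ) with hc
  set D : Fin k → Finset α := fun ℓ => (P ℓ).filter fun v =>
    c * ∏ j ∈ univ.erase ℓ, ((P j).card : ℝ) ≤ ((E.filter fun e => e ℓ = v).card : ℝ)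
  set d : Fin k → ℝ := fun ℓ => ((D ℓ).card : ℝ) / (P ℓ).card
  have hcount := card_le_prod_density_add_mul_sum hE hPne (fun ℓ => filter_subset _ _) c
    fun ℓ v hv => (not_le.1 fun h => (mem_sdiff.1 hv).2 (mem_filter.2 ⟨(mem_sdiff.1 hv).1, h⟩)).le
  have hd : ∀ ℓ, d ℓ < t ℓ + c := fun ℓ =>
    (div_lt_iff₀ (by exact_mod_cast (hPne ℓ).card_pos)).2 (hdeg ℓ)
  have hsum : ∑ ℓ, d ℓ ≤ 1 + (k + 1) * c := by
    have : ∑ ℓ, d ℓ ≤ ∑ ℓ, (t ℓ + c) := sum_le_sum fun ℓ _ => (hd ℓ).le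
    rw [sum_add_distrib, sum_const, card_univ, Fintype.card_fin, nsmul_eq_mul] at this
    linarith
  have hbound := prod_add_mul_sum_one_sub_lt hk hε hε2 (by rw [hc, hρ₀]) d
    (fun ℓ => by positivity) hsum
  calc (E.card : ℝ) ≤ _ := hcount
    _ < _ := mul_lt_mul_of_pos_right hbound
      (prod_pos fun ℓ _ => by exact_mod_cast (hPne ℓ).card_pos)

/-- counting step in Lemma 5.2.  Let `ε ∈ (0, 1/2)`, `k ≥ 3`,
`ρ₀ = ε·k^{1−k}`, and `t 1, …, t k ∈ [0,1]` with `∑ ℓ, t ℓ < 1 + ρ₀·binom(k,2)`.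
Suppose `A` is a `k`-partite `k`-graph with parts `P 1, …, P k` (edges modelled as
transversal functions `e : Fin k → α` with `e ℓ ∈ P ℓ`) such that for each `ℓ`, the set
of vertices `v ∈ P ℓ` contained in at least `ρ₀·binom(k,2)·∏_{j≠ℓ}|P j|` edges has size
less than `(t ℓ + ρ₀·binom(k,2))·|P ℓ|`.  Then
`|E(A)| < (k^{−k} + ε)·∏ ℓ, |P ℓ|`. -/
theorem stmt8 {α : Type*} [DecidableEq α] (k : ℕ) (hk : 3 ≤ k)
    (ε : ℝ) (hε : 0 < ε) (hε2 : ε < 1 / 2)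
    (ρ₀ : ℝ) (hρ₀ : ρ₀ = ε / (k : ℝ) ^ (k - 1))
    (t : Fin k → ℝ) (ht : ∀ ℓ, t ℓ ∈ Set.Icc (0 : ℝ) 1)
    (htsum : ∑ ℓ, t ℓ < 1 + ρ₀ * (k.choose 2 : ℝ))
    (P : Fin k → Finset α) (hPne : ∀ ℓ, (P ℓ).Nonempty)
    (E : Finset (Fin k → α)) (hE : ∀ e ∈ E, ∀ ℓ, e ℓ ∈ P ℓ)
    (hdeg : ∀ ℓ : Fin k,
      ((((P ℓ).filter (fun v =>
          ρ₀ * (k.choose 2 : ℝ) * ∏ j ∈ Finset.univ.erase ℓ, ((P j).card : ℝ)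
            ≤ ((E.filter (fun e => e ℓ = v)).card : ℝ))).card : ℝ)
        < (t ℓ + ρ₀ * (k.choose 2 : ℝ)) * ((P ℓ).card : ℝ))) :
    (E.card : ℝ) < (((k : ℝ) ^ k)⁻¹ + ε) * ∏ ℓ, ((P ℓ).card : ℝ) :=
  stmt8_general k hk ε hε hε2 ρ₀ hρ₀ t htsum P hPne E hE hdeg
end

section
/- Let k ≥ 3 and let F be a k-graph that fails to satisfy the following property (♠*) for some pair i < j in [k]: F can be partitioned into two spanning subhypergraphs F¹ and F² admitting a common vanishing vertex ordering such that for any edges e₁ ∈ E(F¹), e₂ ∈ E(F²) with |e₁ ∩ e₂| = k−1, the (k−1)-set e₁ ∩ e₂ is either the same ℓ-type with respect to both F¹ and F² for some ℓ ∈ [k], or is i-type w.r.t. F¹ and j-type w.r.t. F². Then π_{k−2}(F) ≥ 3(k+1)^{−k}. -/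
open scoped Classical BigOperators

noncomputable section

/-- Under the ordering `ord`, the `(k−1)`-set `S` is `ℓ`-type w.r.t. the hypergraph `G`
(`ℓ ∈ [k]`, 1-based): there is a vertex `v` with `S ∪ {v} ∈ E(G)` such that `v` occupies
the `ℓ`-th position of the ordered edge `S ∪ {v}`. -/
def IsType {V : Type*} [DecidableEq V] (ord : V → ℕ) (G : Finset (Finset V))
    (S : Finset V) (ℓ : ℕ) : Prop :=
  ∃ v, v ∉ S ∧ insert v S ∈ G ∧ rankIn ord (insert v S) v + 1 = ℓ

/-- Property (♠*) for the pair `i < j`: `F` can be partitioned into two spanning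
subhypergraphs `F₁`, `F₂` admitting a common vanishing vertex ordering such that for any
edges `e₁ ∈ F₁`, `e₂ ∈ F₂` with `|e₁ ∩ e₂| = k−1`, the set `e₁ ∩ e₂` is either the same
`ℓ`-type w.r.t. both `F₁` and `F₂` for some `ℓ ∈ [k]`, or is `i`-type w.r.t. `F₁` and
`j`-type w.r.t. `F₂`. -/
def SpadeStar (k f : ℕ) (F : Finset (Finset (Fin f))) (i j : ℕ) : Prop :=
  ∃ F1 F2 : Finset (Finset (Fin f)), F1 ∪ F2 = F ∧ Disjoint F1 F2 ∧
    ∃ ord : Fin f → ℕ, Function.Injective ord ∧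
      IsVanishing k F1 ord ∧ IsVanishing k F2 ord ∧
      ∀ e1 ∈ F1, ∀ e2 ∈ F2, (e1 ∩ e2).card = k - 1 →
        ((∃ ℓ ∈ Finset.Icc 1 k, IsType ord F1 (e1 ∩ e2) ℓ ∧ IsType ord F2 (e1 ∩ e2) ℓ) ∨
          (IsType ord F1 (e1 ∩ e2) i ∧ IsType ord F2 (e1 ∩ e2) j))

/-!
Colour every set of vertices of `Fin n` uniformly at random with `k + 1` colours, and keep a
`k`-set `e` iff the colours of its `(k - 1)`-subsets `e ∖ {x}`, listed by the rank of `x` in `e`,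
follow one of three palettes: the rank itself, or the rank with `i - 1` (resp. `j - 1`) replaced
by the extra colour `k`. In an embedded copy of `F`, the edges following the first two palettes
and those following the third, together with the decoded colours, would witness (♠*); hence the
graph is `F`-free.

Each `k`-set is kept with probability `3 (k + 1)^(-k)`, and these events are independent for
`k`-sets no two of which share a `(k - 1)`-subset, as for distinct `k`-sets with the same vertex
sum mod `n`. A Chernoff bound in each of these `n` classes and a union bound over the `2^(n choose (k - 2))` possible
`(k - 2)`-graphs give, for `n` large, a colouring for which the graph is
`(3 (k + 1)^(-k), μ, k - 2)`-dense.
-/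

theorem IsDense.mono {k j n : ℕ} {d μ μ' : ℝ} {E : Finset (Finset (Fin n))}
    (h : IsDense k j n d μ E) (hμ : μ ≤ μ') : IsDense k j n d μ' E := fun G hG =>
  (sub_le_sub_left (mul_le_mul_of_nonneg_right hμ (by positivity)) _).trans (h G hG)

namespace PaletteConstruction

open Finset Real

section Rank

variable {V : Type*} [DecidableEq V] (ord : V → ℕ)

theorem rankIn_lt_card {e : Finset V} {x : V} (hx : x ∈ e) : rankIn ord e x < e.card :=
  card_lt_card <| filter_ssubset.2 ⟨x, hx, lt_irrefl _⟩

theorem rankIn_lt_rankIn {e : Finset V} {x y : V} (hx : x ∈ e) (hxy : ord x < ord y) :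
    rankIn ord e x < rankIn ord e y := by
  refine card_lt_card (Finset.ssubset_iff_subset_ne.2 ⟨fun z hz => ?_, fun h => ?_⟩)
  · rw [mem_filter] at hz ⊢
    exact ⟨hz.1, hz.2.trans hxy⟩
  · have hx' : x ∈ e.filter (fun z => ord z < ord y) := mem_filter.2 ⟨hx, hxy⟩
    simp [← h] at hx'

theorem exists_rankIn_eq (hord : Function.Injective ord) (e : Finset V) {ρ : ℕ}
    (hρ : ρ < e.card) : ∃ x ∈ e, rankIn ord e x = ρ := by
  have hinj : ∀ x y, x ∈ e → y ∈ e → rankIn ord e x = rankIn ord e y → x = y := by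
    intro x y hx hy hxy
    rcases lt_trichotomy (ord x) (ord y) with h | h | h
    · exact absurd hxy (rankIn_lt_rankIn ord hx h).ne
    · exact hord h
    · exact absurd hxy (rankIn_lt_rankIn ord hy h).ne'
  obtain ⟨x, hx, hxρ⟩ := surj_on_of_inj_on_of_card_le (t := range e.card)
    (fun x _ => rankIn ord e x) (fun x hx => mem_range.2 (rankIn_lt_card ord hx)) hinj
    (by simp) ρ (mem_range.2 hρ)
  exact ⟨x, hx, hxρ.symm⟩

theorem rankIn_comp {W : Type*} [DecidableEq W] (ord : W → ℕ) {g : V → W}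
    (hg : Function.Injective g) (e : Finset V) (x : V) :
    rankIn (ord ∘ g) e x = rankIn ord (e.image g) (g x) := by
  simp only [rankIn, filter_image, card_image_of_injective _ hg, Function.comp_apply]

end Rank

def FollowsPattern {V : Type*} [DecidableEq V] (k : ℕ) (ord : V → ℕ) (col : Finset V → ℕ)
    (m : ℕ) (e : Finset V) : Prop :=
  ∀ x ∈ e, col (e.erase x) = if rankIn ord e x = m then k else rankIn ord e x

section Pattern

variable {V : Type*} [DecidableEq V] {k : ℕ} {ord : V → ℕ} {col : Finset V → ℕ}

theorem isVanishing_of_followsPattern {a : ℕ} (ha : a < k) {G : Finset (Finset V)}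
    (hG : ∀ e ∈ G, e.card = k ∧ ∃ m, (m = a ∨ m = k) ∧ FollowsPattern k ord col m e) :
    IsVanishing k G ord := by
  refine ⟨fun S => if col S < k then col S else a, fun S => by dsimp only; split_ifs <;> omega,
    fun e he x hx => ?_⟩
  obtain ⟨hek, m, hm, hcol⟩ := hG e he
  have := hek ▸ rankIn_lt_card ord hx
  dsimp only
  rw [hcol x hx]
  split_ifs <;> omega

/-- The colour of the common `(k-1)`-set decides the types: a colour `< k` is the common rank
of the two missing vertices, the extra colour `k` forces ranks `i - 1` and `j - 1`. -/
theorem isType_inter_of_followsPattern {G₁ G₂ : Finset (Finset V)} {i j m : ℕ} (hi : 1 ≤ i)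
    (hij : i < j) (hj : j ≤ k) (hm : m = i - 1 ∨ m = k) {e₁ e₂ : Finset V} (he₁ : e₁ ∈ G₁)
    (he₂ : e₂ ∈ G₂) (hc₁ : e₁.card = k) (hc₂ : e₂.card = k) (hcap : (e₁ ∩ e₂).card = k - 1)
    (hf₁ : FollowsPattern k ord col m e₁) (hf₂ : FollowsPattern k ord col (j - 1) e₂) :
    (∃ ℓ ∈ Icc 1 k, IsType ord G₁ (e₁ ∩ e₂) ℓ ∧ IsType ord G₂ (e₁ ∩ e₂) ℓ) ∨
      (IsType ord G₁ (e₁ ∩ e₂) i ∧ IsType ord G₂ (e₁ ∩ e₂) j) := by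
  set S := e₁ ∩ e₂
  obtain ⟨x₁, hx₁S, hx₁⟩ :=
    (exists_eq_insert_iff (s := S) (t := e₁)).2 ⟨inter_subset_left, by omega⟩
  obtain ⟨x₂, hx₂S, hx₂⟩ :=
    (exists_eq_insert_iff (s := S) (t := e₂)).2 ⟨inter_subset_right, by omega⟩
  have h₁ := hf₁ x₁ (hx₁ ▸ mem_insert_self x₁ S)
  have h₂ := hf₂ x₂ (hx₂ ▸ mem_insert_self x₂ S)
  have hρ₁ := hc₁ ▸ rankIn_lt_card ord (hx₁ ▸ mem_insert_self x₁ S)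
  have hρ₂ := hc₂ ▸ rankIn_lt_card ord (hx₂ ▸ mem_insert_self x₂ S)
  rw [← hx₁] at h₁ he₁ hρ₁
  rw [← hx₂] at h₂ he₂ hρ₂
  rw [erase_insert hx₁S] at h₁
  rw [erase_insert hx₂S] at h₂
  by_cases hρ : rankIn ord (insert x₂ S) x₂ = j - 1
  · right
    exact ⟨⟨x₁, hx₁S, he₁, by split_ifs at h₁ h₂ <;> omega⟩, ⟨x₂, hx₂S, he₂, by omega⟩⟩
  · left
    exact ⟨rankIn ord (insert x₁ S) x₁ + 1, mem_Icc.2 ⟨by omega, by omega⟩,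
      ⟨x₁, hx₁S, he₁, rfl⟩, ⟨x₂, hx₂S, he₂, by split_ifs at h₁ h₂ <;> omega⟩⟩

end Pattern

section Construction

abbrev Colouring (n k : ℕ) := Finset (Fin n) → Fin (k + 1)

def recolour (k m ρ : ℕ) : Fin (k + 1) := if ρ = m then Fin.last k else Fin.ofNat (k + 1) ρ

theorem val_recolour {k m ρ : ℕ} (hρ : ρ < k) :
    (recolour k m ρ : ℕ) = if ρ = m then k else ρ := by
  unfold recolour
  split_ifs
  · rfl
  · exact (Fin.val_ofNat (k + 1) ρ).trans (Nat.mod_eq_of_lt (by omega))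

variable {n k : ℕ}

def Matches (r : Colouring n k) (m : ℕ) (e : Finset (Fin n)) : Prop :=
  ∀ x ∈ e, r (e.erase x) = recolour k m (rankIn Fin.val e x)

/-- The three palettes of Theorem 1.7, with `k + 1` colours. Since ranks are `< k`, the
pattern `m = k` is the plain colouring by rank. -/
def patternGraph (k i j n : ℕ) (r : Colouring n k) : Finset (Finset (Fin n)) :=
  (powersetCard k univ).filter fun e => ∃ m ∈ ({i - 1, j - 1, k} : Finset ℕ), Matches r m e

theorem isUniform_patternGraph (i j : ℕ) (r : Colouring n k) :
    HGIsUniform k (patternGraph k i j n r) :=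
  fun _ he => (mem_powersetCard.1 (mem_filter.1 he).1).2

theorem followsPattern_of_matches {f : ℕ} {r : Colouring n k} {m : ℕ} {g : Fin f → Fin n}
    (hg : Function.Injective g) {e : Finset (Fin f)} (he : e.card = k)
    (hm : Matches r m (e.image g)) :
    FollowsPattern k (Fin.val ∘ g) (fun S => (r (S.image g) : ℕ)) m e := fun x hx => by
  dsimp only
  rw [image_erase hg, hm (g x) (mem_image_of_mem g hx), ← rankIn_comp _ hg,
    val_recolour (he ▸ rankIn_lt_card _ hx)]

theorem hgFree_patternGraph {f : ℕ} {F : Finset (Finset (Fin f))} (hF : HGIsUniform k F)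
    {i j : ℕ} (hi : 1 ≤ i) (hij : i < j) (hj : j ≤ k) (h : ¬ SpadeStar k f F i j)
    (r : Colouring n k) : HGFree F (patternGraph k i j n r) := by
  rintro ⟨g, hg, hgF⟩
  set Follows := FollowsPattern k (Fin.val ∘ g) (fun S => (r (S.image g) : ℕ))
  have hfollows : ∀ e ∈ F, ∃ m ∈ ({i - 1, j - 1, k} : Finset ℕ), Follows m e := by
    intro e he
    obtain ⟨m, hm, hmatch⟩ := (mem_filter.1 (hgF e he)).2
    exact ⟨m, hm, followsPattern_of_matches hg (hF e he) hmatch⟩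
  set F₁ := F.filter fun e => Follows (i - 1) e ∨ Follows k e
  set F₂ := F.filter fun e => ¬ (Follows (i - 1) e ∨ Follows k e)
  have hF₁ : ∀ e ∈ F₁, e.card = k ∧ ∃ m, (m = i - 1 ∨ m = k) ∧ Follows m e := by
    intro e he
    obtain ⟨he, hfol⟩ := mem_filter.1 he
    refine ⟨hF e he, ?_⟩
    rcases hfol with hfol | hfol
    exacts [⟨_, Or.inl rfl, hfol⟩, ⟨_, Or.inr rfl, hfol⟩]
  have hF₂ : ∀ e ∈ F₂, e.card = k ∧ Follows (j - 1) e := by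
    intro e he
    obtain ⟨he, hnot⟩ := mem_filter.1 he
    obtain ⟨m, hm, hfol⟩ := hfollows e he
    simp only [mem_insert, mem_singleton] at hm
    refine ⟨hF e he, ?_⟩
    rcases hm with rfl | rfl | rfl <;> tauto
  refine h ⟨F₁, F₂, filter_union_filter_not_eq _ _, disjoint_filter_filter_not _ _ _,
    Fin.val ∘ g, Fin.val_injective.comp hg, isVanishing_of_followsPattern (by omega) hF₁,
    isVanishing_of_followsPattern (by omega) fun e he => ⟨(hF₂ e he).1, _, Or.inl rfl,
      (hF₂ e he).2⟩, fun e₁ he₁ e₂ he₂ hcap => ?_⟩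
  obtain ⟨hc₁, m, hm, hf₁⟩ := hF₁ e₁ he₁
  obtain ⟨hc₂, hf₂⟩ := hF₂ e₂ he₂
  exact isType_inter_of_followsPattern hi hij hj hm he₁ he₂ hc₁ hc₂ hcap hf₁ hf₂

end Construction

section Independence

theorem expect_prod_type {α γ : Type*} [Fintype α] [Fintype γ] (g : α → γ → ℝ) :
    𝔼 p : α × γ, g p.1 p.2 = 𝔼 a, 𝔼 c, g a c := by
  rw [← expect_product', univ_product_univ]

variable {ι β : Type*} [Fintype ι] [DecidableEq ι] [Fintype β]

/-- Swapping the coordinates in `A` between two colourings is an involution of the pairs, and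
it turns a pair `(r, r')` into one whose first entry agrees with `r` on `A` and with `r'` on
`B ⊆ Aᶜ`. -/
theorem expect_mul_of_dependsOn_of_disjoint [Nonempty β] {A B : Finset ι} {φ ψ : (ι → β) → ℝ}
    (hφ : DependsOn φ (A : Set ι)) (hψ : DependsOn ψ (B : Set ι)) (hAB : Disjoint A B) :
    𝔼 r, φ r * ψ r = (𝔼 r, φ r) * 𝔼 r, ψ r := by
  let σ : (ι → β) × (ι → β) → (ι → β) × (ι → β) :=
    fun p => (A.piecewise p.1 p.2, A.piecewise p.2 p.1)
  have hσ : Function.Involutive σ := fun p => by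
    ext a <;> by_cases ha : a ∈ A <;> simp [σ, ha]
  have hφσ : ∀ p, φ (σ p).1 = φ p.1 := fun p => hφ fun a ha => piecewise_eq_of_mem _ _ _ ha
  have hψσ : ∀ p, ψ (σ p).1 = ψ p.2 := fun p =>
    hψ fun a ha => piecewise_eq_of_notMem _ _ _ (disjoint_right.1 hAB ha)
  calc 𝔼 r, φ r * ψ r = 𝔼 p : (ι → β) × (ι → β), φ (σ p).1 * ψ (σ p).1 := by
        rw [Fintype.expect_equiv hσ.toPerm (fun p => φ (σ p).1 * ψ (σ p).1)
          (fun p => φ p.1 * ψ p.1) fun _ => rfl, expect_prod_type fun r _ => φ r * ψ r]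
        simp
    _ = (𝔼 r, φ r) * 𝔼 r, ψ r := by
        simp only [hφσ, hψσ]
        rw [expect_prod_type fun r r' => φ r * ψ r', Fintype.expect_mul_expect]

theorem expect_prod_of_dependsOn [Nonempty β] {κ : Type*} {K : Finset κ} {A : κ → Finset ι}
    {φ : κ → (ι → β) → ℝ} (hφ : ∀ e ∈ K, DependsOn (φ e) (A e : Set ι))
    (hA : (K : Set κ).PairwiseDisjoint A) :
    𝔼 r, ∏ e ∈ K, φ e r = ∏ e ∈ K, 𝔼 r, φ e r := by
  classical
  induction K using Finset.cons_induction with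
  | empty => simp
  | cons a K ha ih =>
    have hK : ∀ e ∈ K, e ∈ cons a K ha := fun e he => mem_cons.2 (Or.inr he)
    simp only [prod_cons]
    rw [expect_mul_of_dependsOn_of_disjoint (B := K.biUnion A) (hφ a (mem_cons_self a K))
      (fun r r' h => prod_congr rfl fun e he => hφ e (hK e he) fun x hx =>
        h x (mem_coe.2 (mem_biUnion.2 ⟨e, he, hx⟩)))
      (disjoint_biUnion_right _ _ _ |>.2 fun e he => hA (mem_cons_self a K) (hK e he)
        fun h => ha (h ▸ he)),
      ih (fun e he => hφ e (hK e he)) (hA.subset fun e he => hK e he)]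

theorem expect_indicator_apply_eq [DecidableEq β] [Nonempty β] (a : ι) (c : β) :
    𝔼 r : ι → β, (if r a = c then (1 : ℝ) else 0) = (Fintype.card β : ℝ)⁻¹ := by
  rw [Fintype.expect_equiv (Equiv.piSplitAt a fun _ => β)
      (fun r => if r a = c then (1 : ℝ) else 0)
      (fun p => if p.1 = c then (1 : ℝ) else 0) fun _ => rfl,
    expect_prod_type fun b _ => if b = c then (1 : ℝ) else 0]
  simp only [Fintype.expect_const]
  rw [Fintype.expect_eq_sum_div_card, sum_ite_eq', if_pos (mem_univ c), one_div]

end Independence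

section Chernoff

theorem exp_le_one_add_add_sq {x : ℝ} (hx : |x| ≤ 1) : exp x ≤ 1 + x + x ^ 2 := by
  have := (abs_le.1 (abs_exp_sub_one_sub_id_le hx)).2
  linarith

theorem bernoulli_mgf_le {p t : ℝ} (hp₀ : 0 ≤ p) (hp₁ : p ≤ 1) (ht : |t| ≤ 1) :
    p * exp (-(t * (1 - p))) + (1 - p) * exp (t * p) ≤ exp (t ^ 2) := by
  have hq : |t * (1 - p)| ≤ 1 := by
    rw [abs_mul, abs_of_nonneg (by linarith : 0 ≤ 1 - p)]
    nlinarith [abs_nonneg t]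
  have hp : |t * p| ≤ 1 := by
    rw [abs_mul, abs_of_nonneg hp₀]
    nlinarith [abs_nonneg t]
  have h₁ := exp_le_one_add_add_sq (x := -(t * (1 - p))) (by rwa [abs_neg])
  have h₂ := exp_le_one_add_add_sq hp
  have h₃ := add_one_le_exp (t ^ 2)
  nlinarith [mul_le_mul_of_nonneg_left h₁ hp₀, mul_le_mul_of_nonneg_left h₂ (sub_nonneg.2 hp₁),
    mul_nonneg (mul_nonneg hp₀ (sub_nonneg.2 hp₁)) (sq_nonneg t), sq_nonneg t]

variable {Ω : Type*} [Fintype Ω]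

theorem expect_exp_centred_indicator_le [Nonempty Ω] (P : Ω → Prop) [DecidablePred P] {p t : ℝ}
    (hp : 𝔼 ω, (if P ω then (1 : ℝ) else 0) = p) (ht : |t| ≤ 1) :
    𝔼 ω, exp (-(t * ((if P ω then (1 : ℝ) else 0) - p))) ≤ exp (t ^ 2) := by
  have hp₀ : 0 ≤ p := hp ▸ expect_nonneg fun ω _ => by split_ifs <;> norm_num
  have hp₁ : p ≤ 1 := hp ▸ expect_le univ_nonempty fun ω _ => by split_ifs <;> norm_num
  have hsplit : ∀ ω, exp (-(t * ((if P ω then (1 : ℝ) else 0) - p))) =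
      (if P ω then (1 : ℝ) else 0) * (exp (-(t * (1 - p))) - exp (t * p)) + exp (t * p) := by
    intro ω
    split_ifs <;> ring_nf
  simp only [hsplit]
  rw [expect_add_distrib, ← expect_mul, hp, Fintype.expect_const]
  linarith [bernoulli_mgf_le hp₀ hp₁ ht]

theorem expect_indicator_le_exp_mul_expect_exp (X : Ω → ℝ) {s t : ℝ} (ht : 0 ≤ t) :
    𝔼 ω, (if X ω ≤ -s then (1 : ℝ) else 0) ≤ exp (-(t * s)) * 𝔼 ω, exp (-(t * X ω)) := by
  rw [mul_expect]
  refine expect_le_expect fun ω _ => ?_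
  rw [← exp_add]
  split_ifs with h
  · exact one_le_exp (by nlinarith)
  · exact (exp_pos _).le

/-- Chernoff's lower tail bound. -/
theorem expect_indicator_sum_centred_le_exp {ι β κ : Type*} [Fintype ι] [DecidableEq ι]
    [Fintype β] [Nonempty β] {K : Finset κ} {A : κ → Finset ι} {P : κ → (ι → β) → Prop}
    [∀ e, DecidablePred (P e)] (hP : ∀ e ∈ K, DependsOn (P e) (A e : Set ι))
    (hA : (K : Set κ).PairwiseDisjoint A) {p : ℝ}
    (hp : ∀ e ∈ K, 𝔼 r, (if P e r then (1 : ℝ) else 0) = p) {t : ℝ} (ht₀ : 0 ≤ t) (ht₁ : t ≤ 1)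
    (s : ℝ) :
    𝔼 r, (if ∑ e ∈ K, ((if P e r then (1 : ℝ) else 0) - p) ≤ -s then (1 : ℝ) else 0) ≤
      exp (t ^ 2 * K.card - t * s) := by
  have hexp : ∀ r, exp (-(t * ∑ e ∈ K, ((if P e r then (1 : ℝ) else 0) - p))) =
      ∏ e ∈ K, exp (-(t * ((if P e r then (1 : ℝ) else 0) - p))) := fun r => by
    rw [← exp_sum, mul_sum, ← sum_neg_distrib]
  have hdep : ∀ e ∈ K, DependsOn (fun r => exp (-(t * ((if P e r then (1 : ℝ) else 0) - p))))
      (A e : Set ι) := fun e he r r' h => by simp only [hP e he h]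
  have hmgf : ∀ e ∈ K, 𝔼 r, exp (-(t * ((if P e r then (1 : ℝ) else 0) - p))) ≤ exp (t ^ 2) :=
    fun e he => expect_exp_centred_indicator_le (P e) (hp e he) (abs_le.2 ⟨by linarith, ht₁⟩)
  calc _ ≤ exp (-(t * s)) * 𝔼 r, ∏ e ∈ K, exp (-(t * ((if P e r then (1 : ℝ) else 0) - p))) := by
        simpa only [hexp] using expect_indicator_le_exp_mul_expect_exp
          (fun r : ι → β => ∑ e ∈ K, ((if P e r then (1 : ℝ) else 0) - p)) (s := s) ht₀
    _ ≤ exp (-(t * s)) * exp (t ^ 2) ^ K.card := by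
        rw [expect_prod_of_dependsOn hdep hA, ← prod_const]
        exact mul_le_mul_of_nonneg_left
          (prod_le_prod (fun e _ => expect_nonneg fun r _ => (exp_pos _).le) hmgf) (exp_pos _).le
    _ = exp (t ^ 2 * K.card - t * s) := by
        rw [← exp_nat_mul, ← exp_add]
        ring_nf

end Chernoff

section EdgeProbability

variable {n k : ℕ}

theorem expect_indicator_matches (m : ℕ) (e : Finset (Fin n)) :
    𝔼 r : Colouring n k, (if Matches r m e then (1 : ℝ) else 0) = (((k : ℝ) + 1) ^ e.card)⁻¹ := by
  have hind : ∀ r : Colouring n k, (if Matches r m e then (1 : ℝ) else 0) =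
      ∏ x ∈ e, if r (e.erase x) = recolour k m (rankIn Fin.val e x) then 1 else 0 := fun r => by
    rw [prod_boole]
    congr
  have hdisj : (e : Set (Fin n)).PairwiseDisjoint fun x => ({e.erase x} : Finset _) :=
    fun x hx y hy hxy => disjoint_singleton.2 fun h => hxy ((erase_inj e hx).1 h)
  simp only [hind]
  rw [expect_prod_of_dependsOn (A := fun x => {e.erase x})
    (fun x _ r r' h => by rw [h (e.erase x) (mem_singleton_self _)]) hdisj]
  simp only [expect_indicator_apply_eq, Fintype.card_fin, prod_const, inv_pow]
  push_cast
  rfl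

theorem eq_of_matches_of_lt {r : Colouring n k} {m m' : ℕ} {e : Finset (Fin n)}
    (he : e.card = k) (hm : m < k) (h : Matches r m e) (h' : Matches r m' e) : m = m' := by
  by_contra hne
  obtain ⟨x, hx, hxm⟩ := exists_rankIn_eq Fin.val Fin.val_injective e (he ▸ hm)
  have hcol := congrArg Fin.val ((h x hx).symm.trans (h' x hx))
  rw [val_recolour (hxm ▸ hm), val_recolour (hxm ▸ hm), hxm, if_pos rfl, if_neg hne] at hcol
  omega

theorem eq_of_matches {r : Colouring n k} {m m' : ℕ} {e : Finset (Fin n)} (he : e.card = k)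
    (hm : m ≤ k) (hm' : m' ≤ k) (h : Matches r m e) (h' : Matches r m' e) : m = m' := by
  rcases hm.lt_or_eq with hm | rfl
  · exact eq_of_matches_of_lt he hm h h'
  rcases hm'.lt_or_eq with hm' | rfl
  · exact (eq_of_matches_of_lt he hm' h' h).symm
  · rfl

theorem expect_indicator_mem_patternGraph {i j : ℕ} (hi : 1 ≤ i) (hij : i < j) (hj : j ≤ k)
    {e : Finset (Fin n)} (he : e.card = k) :
    𝔼 r, (if e ∈ patternGraph k i j n r then (1 : ℝ) else 0) = 3 * (((k : ℝ) + 1) ^ k)⁻¹ := by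
  set M : Finset ℕ := {i - 1, j - 1, k}
  have hM : M.card = 3 := by
    rw [card_insert_of_notMem (by simp only [mem_insert, mem_singleton]; omega),
      card_pair (by omega)]
  have hind : ∀ r : Colouring n k, (if e ∈ patternGraph k i j n r then (1 : ℝ) else 0) =
      ∑ m ∈ M, if Matches r m e then 1 else 0 := fun r => by
    have hmem : e ∈ patternGraph k i j n r ↔ ∃ m ∈ M, Matches r m e := by
      simp [patternGraph, he, M]
    by_cases hE : e ∈ patternGraph k i j n r
    · obtain ⟨m, hmM, hm⟩ := hmem.1 hE
      have hMk : ∀ m ∈ M, m ≤ k := by simp only [M, mem_insert, mem_singleton]; omega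
      rw [if_pos hE, sum_eq_single_of_mem m hmM fun m' hm'M hne =>
        if_neg fun h' => hne (eq_of_matches he (hMk m' hm'M) (hMk m hmM) h' hm), if_pos hm]
    · rw [if_neg hE, sum_eq_zero fun m hm => if_neg fun h => hE (hmem.2 ⟨m, hm, h⟩)]
  simp only [hind]
  rw [expect_sum_comm, sum_congr rfl fun m _ => expect_indicator_matches m e, sum_const, hM, he,
    nsmul_eq_mul]
  norm_num

theorem dependsOn_mem_patternGraph (i j : ℕ) (e : Finset (Fin n)) :
    DependsOn (fun r : Colouring n k => e ∈ patternGraph k i j n r)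
      (e.image e.erase : Set (Finset (Fin n))) := fun r r' h => by
  have hmatch : ∀ m, Matches r m e ↔ Matches r' m e := fun m =>
    forall₂_congr fun x hx => by rw [h _ (mem_coe.2 (mem_image_of_mem _ hx))]
  simp only [patternGraph, mem_filter, hmatch]

end EdgeProbability

section SumClass

variable {n k : ℕ}

def sumClass (e : Finset (Fin n)) : ℕ := (∑ v ∈ e, (v : ℕ)) % n

theorem eq_of_sumClass_eq_of_erase_eq {e e' : Finset (Fin n)} (hcls : sumClass e = sumClass e')
    {x x' : Fin n} (hx : x ∈ e) (hx' : x' ∈ e') (hS : e.erase x = e'.erase x') : e = e' := by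
  have hsum : ∀ {e : Finset (Fin n)} {x}, x ∈ e →
      ∑ v ∈ e, (v : ℕ) = ∑ v ∈ e.erase x, (v : ℕ) + x := fun hx => (sum_erase_add _ _ hx).symm
  unfold sumClass at hcls
  rw [hsum hx, hsum hx', hS] at hcls
  have hxx' : x = x' := Fin.ext <| by
    simpa [Nat.ModEq, Nat.mod_eq_of_lt x.isLt, Nat.mod_eq_of_lt x'.isLt] using
      Nat.ModEq.add_left_cancel' _ hcls
  subst hxx'
  rw [← insert_erase hx, ← insert_erase hx', hS]

theorem pairwiseDisjoint_image_erase (K : Finset (Finset (Fin n))) (b : ℕ) :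
    ((K.filter fun e => sumClass e = b : Finset _) : Set (Finset (Fin n))).PairwiseDisjoint
      fun e => e.image e.erase := by
  intro e he e' he' hne
  rw [coe_filter] at he he'
  refine disjoint_left.2 fun S hS hS' => ?_
  obtain ⟨x, hx, rfl⟩ := mem_image.1 hS
  obtain ⟨x', hx', hxx'⟩ := mem_image.1 hS'
  exact hne (eq_of_sumClass_eq_of_erase_eq (he.2.trans he'.2.symm) hx hx' hxx'.symm)

theorem card_filter_sumClass_le (hk : 1 ≤ k) (b : ℕ) :
    ((powersetCard k (univ : Finset (Fin n))).filter fun e => sumClass e = b).card ≤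
      n ^ (k - 1) := by
  have hne : ∀ e ∈ (powersetCard k (univ : Finset (Fin n))).filter (fun e => sumClass e = b),
      e.Nonempty := fun e he =>
    card_pos.1 (by rw [(mem_powersetCard.1 (mem_filter.1 he).1).2]; omega)
  calc _ ≤ (powersetCard (k - 1) (univ : Finset (Fin n))).card := by
        refine card_le_card_of_injOn (fun e => if h : e.Nonempty then e.erase (e.min' h) else ∅)
          (fun e he => ?_) fun e he e' he' heq => ?_
        · have hcard := (mem_powersetCard.1 (mem_filter.1 he).1).2
          simp only [dif_pos (hne e he), mem_coe, mem_powersetCard, subset_univ, true_and]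
          rw [card_erase_of_mem (min'_mem _ _), hcard]
        · simp only [dif_pos (hne e he), dif_pos (hne e' he')] at heq
          exact eq_of_sumClass_eq_of_erase_eq ((mem_filter.1 he).2.trans (mem_filter.1 he').2.symm)
            (min'_mem _ _) (min'_mem _ _) heq
    _ = n.choose (k - 1) := by rw [card_powersetCard, card_univ, Fintype.card_fin]
    _ ≤ n ^ (k - 1) := Nat.choose_le_pow _ _

theorem sum_sum_filter_sumClass (hn : 1 ≤ n) (K : Finset (Finset (Fin n)))
    (φ : Finset (Fin n) → ℝ) :
    ∑ b ∈ range n, ∑ e ∈ K.filter (fun e => sumClass e = b), φ e = ∑ e ∈ K, φ e :=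
  sum_fiberwise_of_maps_to (fun _ _ => mem_range.2 (Nat.mod_lt _ hn)) φ

end SumClass

theorem exists_forall_not_of_sum_expect_lt_one {Ω τ : Type*} [Fintype Ω] [Nonempty Ω]
    {T : Finset τ} (Q : τ → Ω → Prop) [∀ t, DecidablePred (Q t)]
    (h : ∑ t ∈ T, 𝔼 ω, (if Q t ω then (1 : ℝ) else 0) < 1) : ∃ ω, ∀ t ∈ T, ¬ Q t ω := by
  by_contra! hall
  have hle : ∀ ω, (1 : ℝ) ≤ ∑ t ∈ T, if Q t ω then (1 : ℝ) else 0 := fun ω => by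
    obtain ⟨t, ht, hQ⟩ := hall ω
    simpa [hQ] using single_le_sum (f := fun t => if Q t ω then (1 : ℝ) else 0)
      (fun _ _ => by positivity) ht
  have := expect_le_expect (s := univ) fun ω (_ : ω ∈ univ) => hle ω
  rw [Fintype.expect_const, expect_sum_comm] at this
  linarith

theorem two_pow_choose_mul_exp_lt_one {k n : ℕ} (hk : 3 ≤ k) {c : ℝ} (hcn : 2 ≤ c * n) :
    2 ^ n.choose (k - 2) * n * exp (-(c * n ^ (k - 1))) < 1 := by
  set m := n ^ (k - 2)
  have h4 : (4 : ℝ) ≤ exp (c * n) := by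
    have h2 : 2 * (2 : ℝ) ≤ exp 1 * exp 1 := by
      have := exp_one_gt_d9
      nlinarith
    calc (4 : ℝ) ≤ exp 2 := by rw [show (2 : ℝ) = 1 + 1 by norm_num, exp_add]; linarith
      _ ≤ exp (c * n) := exp_le_exp.2 hcn
  have hnm : (n : ℝ) < 2 ^ m := by
    exact_mod_cast (Nat.lt_two_pow_self).trans_le
      (Nat.pow_le_pow_right (by norm_num) (Nat.le_self_pow (by omega) n))
  have hexp : exp (c * n) ^ m = exp (c * n ^ (k - 1)) := by
    rw [← exp_nat_mul]
    congr 1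
    rw [show k - 1 = k - 2 + 1 by omega, pow_succ]
    push_cast [m]
    ring
  rw [exp_neg, ← div_eq_mul_inv, div_lt_one (exp_pos _), ← hexp]
  calc 2 ^ n.choose (k - 2) * (n : ℝ) ≤ 2 ^ m * n :=
        mul_le_mul_of_nonneg_right (pow_le_pow_right₀ (by norm_num) (Nat.choose_le_pow _ _))
          n.cast_nonneg
    _ < 2 ^ m * 2 ^ m := mul_lt_mul_of_pos_left hnm (by positivity)
    _ = 4 ^ m := by rw [← mul_pow]; norm_num
    _ ≤ exp (c * n) ^ m := pow_le_pow_left₀ (by norm_num) h4 m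

section Density

variable {n k i j : ℕ}

def surplus (k i j : ℕ) (r : Colouring n k) (K : Finset (Finset (Fin n))) : ℝ :=
  ∑ e ∈ K, ((if e ∈ patternGraph k i j n r then (1 : ℝ) else 0) - 3 * (((k : ℝ) + 1) ^ k)⁻¹)

theorem surplus_eq (r : Colouring n k) (K : Finset (Finset (Fin n))) :
    surplus k i j r K = (K ∩ patternGraph k i j n r).card - 3 * (((k : ℝ) + 1) ^ k)⁻¹ * K.card := by
  rw [surplus, sum_sub_distrib, sum_boole, sum_const, nsmul_eq_mul, filter_mem_eq_inter, mul_comm]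

theorem expect_indicator_surplus_le_exp (hk : 3 ≤ k) (hi : 1 ≤ i) (hij : i < j) (hj : j ≤ k)
    {μ : ℝ} (hμ₀ : 0 < μ) (hμ₁ : μ ≤ 1) (G : Finset (Finset (Fin n))) (b : ℕ) :
    𝔼 r, (if surplus k i j r ((cliqueSet k (k - 2) n G).filter fun e => sumClass e = b) ≤
      -(μ * n ^ (k - 1)) then (1 : ℝ) else 0) ≤ exp (-(μ ^ 2 / 4 * n ^ (k - 1))) := by
  set K := (cliqueSet k (k - 2) n G).filter (fun e => sumClass e = b)
  have hKk : ∀ e ∈ K, e.card = k := fun e he =>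
    (mem_powersetCard.1 (mem_filter.1 (mem_filter.1 he).1).1).2
  have hKcard : (K.card : ℝ) ≤ n ^ (k - 1) := by
    exact_mod_cast (card_le_card (filter_subset_filter _ (filter_subset _ _))).trans
      (card_filter_sumClass_le (n := n) (by omega) b)
  refine (expect_indicator_sum_centred_le_exp (fun e _ => dependsOn_mem_patternGraph i j e)
    (pairwiseDisjoint_image_erase _ b)
    (fun e he => expect_indicator_mem_patternGraph hi hij hj (hKk e he))
    (by positivity : 0 ≤ μ / 2) (by linarith) _).trans (exp_le_exp.2 ?_)
  nlinarith [mul_le_mul_of_nonneg_left hKcard (sq_nonneg (μ / 2))]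

theorem exists_colouring_forall_surplus_gt (hk : 3 ≤ k) (hi : 1 ≤ i) (hij : i < j)
    (hj : j ≤ k) {μ : ℝ} (hμ₀ : 0 < μ) (hμ₁ : μ ≤ 1) (hn : 2 ≤ μ ^ 2 / 4 * n) :
    ∃ r : Colouring n k, ∀ G ∈ (powersetCard (k - 2) (univ : Finset (Fin n))).powerset,
      ∀ b ∈ range n, -(μ * n ^ (k - 1)) <
        surplus k i j r ((cliqueSet k (k - 2) n G).filter fun e => sumClass e = b) := by
  obtain ⟨r, hr⟩ := exists_forall_not_of_sum_expect_lt_one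
    (T := (powersetCard (k - 2) (univ : Finset (Fin n))).powerset ×ˢ range n)
    (fun Gb r => surplus k i j r ((cliqueSet k (k - 2) n Gb.1).filter fun e => sumClass e = Gb.2)
      ≤ -(μ * n ^ (k - 1))) <| by
    calc _ ≤ ∑ _Gb ∈ (powersetCard (k - 2) (univ : Finset (Fin n))).powerset ×ˢ range n,
          exp (-(μ ^ 2 / 4 * n ^ (k - 1))) :=
          sum_le_sum fun Gb _ => expect_indicator_surplus_le_exp hk hi hij hj hμ₀ hμ₁ Gb.1 Gb.2
      _ = 2 ^ n.choose (k - 2) * n * exp (-(μ ^ 2 / 4 * n ^ (k - 1))) := by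
          simp [card_powersetCard]
      _ < 1 := two_pow_choose_mul_exp_lt_one hk hn
  exact ⟨r, fun G hG b hb => not_le.1 (hr (G, b) (mem_product.2 ⟨hG, hb⟩))⟩

theorem isDense_patternGraph (hk : 1 ≤ k) (hn : 1 ≤ n) {μ : ℝ} {r : Colouring n k}
    (hr : ∀ G ∈ (powersetCard (k - 2) (univ : Finset (Fin n))).powerset,
      ∀ b ∈ range n, -(μ * n ^ (k - 1)) <
        surplus k i j r ((cliqueSet k (k - 2) n G).filter fun e => sumClass e = b)) :
    IsDense k (k - 2) n (3 * (((k : ℝ) + 1) ^ k)⁻¹) μ (patternGraph k i j n r) := by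
  intro G hG
  have hG' : G ∈ (powersetCard (k - 2) (univ : Finset (Fin n))).powerset :=
    mem_powerset.2 fun e he => mem_powersetCard.2 ⟨subset_univ _, hG e he⟩
  have hsum := sum_lt_sum_of_nonempty (nonempty_range_iff.2 (by omega)) (hr G hG')
  rw [sum_const, card_range, nsmul_eq_mul] at hsum
  simp only [surplus] at hsum
  rw [sum_sum_filter_sumClass hn, ← surplus, surplus_eq] at hsum
  have hpow : (n : ℝ) * n ^ (k - 1) = n ^ k := by rw [← pow_succ', Nat.sub_add_cancel hk]
  linarith [show (n : ℝ) * -(μ * n ^ (k - 1)) = -(μ * n ^ k) by rw [← hpow]; ring]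

theorem exists_isDense_patternGraph (hk : 3 ≤ k) (hi : 1 ≤ i) (hij : i < j) (hj : j ≤ k)
    {μ : ℝ} (hμ : 0 < μ) (n₀ : ℕ) :
    ∃ n ≥ n₀, ∃ r : Colouring n k,
      IsDense k (k - 2) n (3 * (((k : ℝ) + 1) ^ k)⁻¹) μ (patternGraph k i j n r) := by
  set μ' := min μ 1
  have hμ' : 0 < μ' := lt_min hμ one_pos
  set n := max n₀ (max 1 ⌈8 / μ' ^ 2⌉₊)
  have hn : 2 ≤ μ' ^ 2 / 4 * n := by
    have h8 : 8 / μ' ^ 2 ≤ n := (Nat.le_ceil _).trans (by exact_mod_cast by omega)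
    rw [div_le_iff₀ (by positivity)] at h8
    linarith
  obtain ⟨r, hr⟩ := exists_colouring_forall_surplus_gt (i := i) (j := j) hk hi hij hj hμ'
    (min_le_right _ _) hn
  exact ⟨n, le_max_left _ _, r, (isDense_patternGraph (by omega) (by omega) hr).mono
    (min_le_left _ _)⟩

end Density

end PaletteConstruction

open PaletteConstruction

/-- Theorem 7.1. Let `k ≥ 3` and let `F` be a `k`-graph that fails
property (♠*) for some pair `i < j` in `[k]`.  Then `π_{k−2}(F) ≥ 3·(k+1)^{−k}`. -/
theorem stmt10 (k f : ℕ) (hk : 3 ≤ k) (F : Finset (Finset (Fin f)))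
    (hF : HGIsUniform k F)
    (i j : ℕ) (hi : 1 ≤ i) (hij : i < j) (hj : j ≤ k)
    (h : ¬ SpadeStar k f F i j) :
    3 * (((k : ℝ) + 1) ^ k)⁻¹ ≤ uniformTuranDensity k (k - 2) f F := by
  have hd : 3 * (((k : ℝ) + 1) ^ k)⁻¹ ≤ 1 := by
    rw [mul_inv_le_iff₀ (by positivity), one_mul]
    calc (3 : ℝ) ≤ k + 1 := by norm_cast; omega
      _ ≤ (k + 1) ^ k := le_self_pow₀ (by linarith) (by omega)
  refine le_csSup ⟨1, fun d hd => hd.1.2⟩ ⟨⟨by positivity, hd⟩, fun μ hμ n₀ => ?_⟩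
  obtain ⟨n, hn, r, hr⟩ := exists_isDense_patternGraph hk hi hij hj hμ n₀
  exact ⟨n, hn, patternGraph k i j n r, isUniform_patternGraph i j r,
    hgFree_patternGraph hF hi hij hj h r, hr⟩
end
end
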